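/- arXiv:2106.10908 — 7 statements merged into one kernel-verified Lean document; each statement's English description precedes it below -/
import Mathlib

section
/- Let (X,d) be a metric space and let f : X → ℝ ∪ {+∞} satisfy Assumption A1 for some λ ∈ ℝ. Then for every x in the effective domain D(f), the descending slope admits the global representation |∂f|(x) = sup_{y ≠ x} max( −( f(y) − f(x) − (λ/2) d(y,x)² ), 0 ) / d(y,x). -/
open Filter Topology MeasureTheory
open scoped ENNReal NNReal Classical

section Defs

variable {X : Type*} [MetricSpace X]

/-- The descending slope `|∂f|(x)` of `f : X → ℝ ∪ {+∞}`.  It is `+∞` outside of the effective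
domain, and otherwise `limsup_{y → x} (f x - f y)⁺ / d(y,x)` (which is `0` at isolated points,
since then the limsup is taken along the bottom filter). -/
noncomputable def descSlope (f : X → EReal) (x : X) : ℝ≥0∞ :=
  if f x = ⊤ then ⊤
  else Filter.limsup (fun y => ENNReal.ofReal (((f x - f y) ⊔ 0).toReal / dist y x)) (𝓝[≠] x)

/-- The (upper) metric speed of a curve at a point: where the metric derivative
`lim_{s → t} d(γ s, γ t)/|s - t|` exists, it coincides with this limsup. -/
noncomputable def mSpeed (γ : ℝ → X) (t : ℝ) : ℝ≥0∞ :=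
  Filter.limsup (fun s => ENNReal.ofReal (dist (γ s) (γ t) / |s - t|)) (𝓝[≠] t)

/-- A curve is absolutely continuous on `[a,b]` if its increments are controlled by the
integral of some nonnegative integrable function. -/
def IsACCurveOn (γ : ℝ → X) (a b : ℝ) : Prop :=
  ∃ g : ℝ → ℝ, MeasureTheory.IntegrableOn g (Set.Icc a b) ∧ (∀ t, 0 ≤ g t) ∧
    ∀ s t : ℝ, a ≤ s → s ≤ t → t ≤ b → dist (γ s) (γ t) ≤ ∫ r in s..t, g r

/-- The action integral `∫₀¹ |γ̇|²(t) + |∂f|²(γ(t)) dt`. -/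
noncomputable def actionIntegral (f : X → EReal) (γ : ℝ → X) : ℝ≥0∞ :=
  ∫⁻ t in Set.Ioo (0:ℝ) 1, ((mSpeed γ t) ^ 2 + (descSlope f (γ t)) ^ 2)

/-- The action functional `Θ^f_{x₀,x₁}`. -/
noncomputable def Theta (f : X → EReal) (x₀ x₁ : X) (γ : ℝ → X) : ℝ≥0∞ :=
  if IsACCurveOn γ 0 1 ∧ γ 0 = x₀ ∧ γ 1 = x₁ then actionIntegral f γ else ⊤

/-- `γ : [0,1] → X` is a constant speed geodesic. -/
def IsGeodesic (γ : ℝ → X) : Prop :=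
  ∀ s ∈ Set.Icc (0:ℝ) 1, ∀ t ∈ Set.Icc (0:ℝ) 1,
    dist (γ s) (γ t) = |s - t| * dist (γ 0) (γ 1)

/-- Every pair of points is joined by a constant speed geodesic. -/
def GeodesicSp (X : Type*) [MetricSpace X] : Prop :=
  ∀ x y : X, ∃ γ : ℝ → X, IsGeodesic γ ∧ γ 0 = x ∧ γ 1 = y

/-- `X` is a CAT(0) space. -/
def IsCAT0 (X : Type*) [MetricSpace X] : Prop :=
  GeodesicSp X ∧ ∀ (y : X) (γ : ℝ → X), IsGeodesic γ → ∀ t ∈ Set.Icc (0:ℝ) 1,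
    dist y (γ t) ^ 2 ≤ (1 - t) * dist y (γ 0) ^ 2 + t * dist y (γ 1) ^ 2
      - t * (1 - t) * dist (γ 0) (γ 1) ^ 2

/-- `f` is `λ`-convex along every constant speed geodesic. -/
def LambdaConvex (f : X → EReal) (lam : ℝ) : Prop :=
  ∀ γ : ℝ → X, IsGeodesic γ → ∀ t ∈ Set.Icc (0:ℝ) 1,
    f (γ t) ≤ ((1 - t : ℝ) : EReal) * f (γ 0) + ((t : ℝ) : EReal) * f (γ 1)
      - ((lam / 2 * t * (1 - t) * dist (γ 0) (γ 1) ^ 2 : ℝ) : EReal)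

/-- The resolvent `J_τ^f x`: the set of minimizers of `y ↦ f y + d(y,x)²/(2τ)`. -/
def resolvSet (f : X → EReal) (τ : ℝ) (x : X) : Set X :=
  {u | ∀ y : X, f u + ((dist u x ^ 2 / (2 * τ) : ℝ) : EReal)
      ≤ f y + ((dist y x ^ 2 / (2 * τ) : ℝ) : EReal)}

def IsBoundedSeq (u : ℕ → X) : Prop := ∃ R : ℝ, ∀ n, dist (u n) (u 0) ≤ R

/-- `x` is the asymptotic centre of the (bounded) sequence `u`, i.e. the unique minimizer of
`y ↦ limsup_n d(y, u n)²`. -/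
def IsAsympCentre (u : ℕ → X) (x : X) : Prop :=
  ∀ y : X, y ≠ x →
    Filter.limsup (fun n => dist x (u n) ^ 2) Filter.atTop
      < Filter.limsup (fun n => dist y (u n) ^ 2) Filter.atTop

/-- Weak convergence: `u` is bounded and `x` is the asymptotic centre of every subsequence. -/
def WeakConv (u : ℕ → X) (x : X) : Prop :=
  IsBoundedSeq u ∧ ∀ φ : ℕ → ℕ, StrictMono φ → IsAsympCentre (u ∘ φ) x

/-- Mosco convergence of `F h` to `f`. -/
def MoscoConv (F : ℕ → X → EReal) (f : X → EReal) : Prop :=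
  (∀ (u : ℕ → X) (x : X), WeakConv u x →
      f x ≤ Filter.liminf (fun h => F h (u h)) Filter.atTop) ∧
  (∀ x : X, ∃ u : ℕ → X, Filter.Tendsto u Filter.atTop (𝓝 x) ∧
      Filter.limsup (fun h => F h (u h)) Filter.atTop ≤ f x)

/-- (Metric) Γ-convergence of `F h` to `f`. -/
def GammaConvSeq (F : ℕ → X → EReal) (f : X → EReal) : Prop :=
  (∀ (u : ℕ → X) (x : X), Filter.Tendsto u Filter.atTop (𝓝 x) →
      f x ≤ Filter.liminf (fun h => F h (u h)) Filter.atTop) ∧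
  (∀ x : X, ∃ u : ℕ → X, Filter.Tendsto u Filter.atTop (𝓝 x) ∧
      Filter.limsup (fun h => F h (u h)) Filter.atTop ≤ f x)

/-- Assumption 2.4.5 of Ambrosio-Gigli-Savaré: convexity of the Moreau-Yosida perturbations
along some curve, with base point `x₀`. -/
def AssumptionA1 (f : X → EReal) (lam : ℝ) : Prop :=
  ∀ x₀ x₁ : X, f x₀ ≠ ⊤ → f x₁ ≠ ⊤ →
    ∃ γ : ℝ → X, γ 0 = x₀ ∧ γ 1 = x₁ ∧
      ∀ τ : ℝ, 0 < τ → τ * max (-lam) 0 < 1 →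
        ∀ t ∈ Set.Icc (0:ℝ) 1,
          f (γ t) ≤ (((1 - t) * (f x₀).toReal
            + t * ((f x₁).toReal + dist x₁ x₀ ^ 2 / (2 * τ))
            - (1 / 2) * (lam + 1 / τ) * t * (1 - t) * dist x₀ x₁ ^ 2
            - dist (γ t) x₀ ^ 2 / (2 * τ) : ℝ) : EReal)

/-- Assumption 4.0.1 of Ambrosio-Gigli-Savaré: convexity of the Moreau-Yosida perturbations
along some curve, for every base point `y`. -/
def AssumptionA2 (f : X → EReal) (lam : ℝ) : Prop :=
  ∀ y x₀ x₁ : X, f y ≠ ⊤ → f x₀ ≠ ⊤ → f x₁ ≠ ⊤ →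
    ∃ γ : ℝ → X, γ 0 = x₀ ∧ γ 1 = x₁ ∧
      ∀ τ : ℝ, 0 < τ → τ * max (-lam) 0 < 1 →
        ∀ t ∈ Set.Icc (0:ℝ) 1,
          f (γ t) ≤ (((1 - t) * ((f x₀).toReal + dist x₀ y ^ 2 / (2 * τ))
            + t * ((f x₁).toReal + dist x₁ y ^ 2 / (2 * τ))
            - (1 / 2) * (lam + 1 / τ) * t * (1 - t) * dist x₀ x₁ ^ 2
            - dist (γ t) y ^ 2 / (2 * τ) : ℝ) : EReal)

/-- `G` is an `EVI_λ` gradient flow trajectory for `f` starting at `x`. -/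
def IsEVIFlow (f : X → EReal) (lam : ℝ) (x : X) (G : ℝ → X) : Prop :=
  G 0 = x ∧ Filter.Tendsto G (𝓝[>] (0:ℝ)) (𝓝 x) ∧
  (∀ t : ℝ, 0 < t → f (G t) ≠ ⊤) ∧
  (∀ a b : ℝ, 0 < a → a ≤ b → IsACCurveOn G a b) ∧
  ∀ v : X, f v ≠ ⊤ →
    ∀ᵐ t ∂(MeasureTheory.volume.restrict (Set.Ioi (0:ℝ))),
      ∃ L : ℝ, HasDerivAt (fun s => dist (G s) v ^ 2) L t ∧
        f (G t) + ((L / 2 + lam / 2 * dist (G t) v ^ 2 : ℝ) : EReal) ≤ f v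

/-- Γ-convergence of the functionals `Th h` to `T` on `C([0,1], X)` with respect to uniform
convergence on `[0,1]`. -/
def ThetaGammaConv (Th : ℕ → (ℝ → X) → ℝ≥0∞) (T : (ℝ → X) → ℝ≥0∞) : Prop :=
  (∀ γ : ℝ → X, ContinuousOn γ (Set.Icc 0 1) →
    ∀ Γ : ℕ → ℝ → X, (∀ h, ContinuousOn (Γ h) (Set.Icc 0 1)) →
      TendstoUniformlyOn (fun h t => Γ h t) γ Filter.atTop (Set.Icc 0 1) →
      T γ ≤ Filter.liminf (fun h => Th h (Γ h)) Filter.atTop) ∧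
  (∀ γ : ℝ → X, ContinuousOn γ (Set.Icc 0 1) →
    ∃ Γ : ℕ → ℝ → X, (∀ h, ContinuousOn (Γ h) (Set.Icc 0 1)) ∧
      TendstoUniformlyOn (fun h t => Γ h t) γ Filter.atTop (Set.Icc 0 1) ∧
      Filter.limsup (fun h => Th h (Γ h)) Filter.atTop ≤ T γ)

end Defs

/-!
For `y ≠ x`, `(f x - f y)⁺ / d(y,x)` exceeds the global quotient by at most `λ⁻ d(y,x) / 2`,
which vanishes as `y → x`; hence `|∂f|(x)` is at most the supremum.  Conversely, fix `y` with
`A := f x + (λ/2) d(y,x)² - f y > 0` and the curve `γ` of Assumption A1 from `x` to `y`.  Letting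
`τ ↓ 0` in A1 gives `d(γ t, x) ≤ t d(y,x)`, and letting `τ ↑ 1/λ⁻` gives
`f x - f (γ t) ≥ t A - O(t²)`, so along `γ` the difference quotients at `x` tend to at least
`A / d(y,x)`.
-/

open Set

lemma EReal.toReal_coe_sup_zero (r : ℝ) : ((r : EReal) ⊔ 0).toReal = max r 0 := by
  rw [← EReal.coe_zero, ← EReal.coe_strictMono.monotone.map_max, EReal.toReal_coe]

lemma ENNReal.limsup_le_of_le_add_of_tendsto_zero {α : Type*} {l : Filter α} {g φ : α → ℝ≥0∞}
    {S : ℝ≥0∞} (h : ∀ᶠ y in l, g y ≤ S + φ y) (hφ : Tendsto φ l (𝓝 0)) : limsup g l ≤ S := by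
  rcases l.eq_or_neBot with rfl | _
  · simp
  have hlim : Tendsto (fun y => S + φ y) l (𝓝 S) := by
    simpa using (tendsto_const_nhds (x := S)).add hφ
  calc limsup g l ≤ limsup (fun y => S + φ y) l := limsup_le_limsup h
    _ = S := hlim.limsup_eq

lemma nonpos_and_le_of_forall_lt_add_mul_le {a b m K : ℝ} (h : ∀ s, m < s → a + s * b ≤ K) :
    b ≤ 0 ∧ a + m * b ≤ K := by
  constructor
  · by_contra! hb
    have := h (max (m + 1) ((K - a) / b + 1)) (by linarith [le_max_left (m + 1) ((K - a) / b + 1)])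
    have h2 : ((K - a) / b + 1) * b ≤ max (m + 1) ((K - a) / b + 1) * b :=
      mul_le_mul_of_nonneg_right (le_max_right _ _) hb.le
    rw [add_mul, div_mul_cancel₀ _ hb.ne'] at h2
    linarith
  · have hcont : Tendsto (fun s => a + s * b) (𝓝[>] m) (𝓝 (a + m * b)) :=
      ((continuous_const.add (continuous_id.mul continuous_const)).tendsto m).mono_left
        nhdsWithin_le_nhds
    exact le_of_tendsto hcont (eventually_nhdsWithin_of_forall h)

section Slope

variable {X : Type*} [MetricSpace X]

noncomputable def globalSlope (f : X → EReal) (lam : ℝ) (x : X) : ℝ≥0∞ :=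
  ⨆ y ∈ {y : X | y ≠ x},
      ENNReal.ofReal
        (((f x + ((lam / 2 * dist y x ^ 2 : ℝ) : EReal) - f y) ⊔ 0).toReal / dist y x)

lemma descSlope_le_globalSlope {f : X → EReal} {x : X} {Fx : ℝ} (hx : f x = Fx) (lam : ℝ) :
    descSlope f x ≤ globalSlope f lam x := by
  rw [descSlope, if_neg (by simp [hx])]
  refine ENNReal.limsup_le_of_le_add_of_tendsto_zero
    (φ := fun y => ENNReal.ofReal (max (-lam) 0 / 2 * dist y x)) ?_ ?_
  · filter_upwards [self_mem_nhdsWithin] with y (hy : y ≠ x)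
    have hd : 0 < dist y x := dist_pos.2 hy
    have hterm := le_iSup₂ (f := fun y (_ : y ∈ {y : X | y ≠ x}) => ENNReal.ofReal
        (((f x + ((lam / 2 * dist y x ^ 2 : ℝ) : EReal) - f y) ⊔ 0).toReal / dist y x)) y hy
    refine le_trans ?_ (add_le_add_left hterm _)
    rw [hx]
    induction f y with
    | bot => simp
    | top => simp
    | coe Fy =>
      rw [← EReal.coe_add, ← EReal.coe_sub, ← EReal.coe_sub, EReal.toReal_coe_sup_zero,
        EReal.toReal_coe_sup_zero, ← ENNReal.ofReal_add (by positivity) (by positivity)]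
      refine ENNReal.ofReal_le_ofReal ?_
      calc max (Fx - Fy) 0 / dist y x
          ≤ (max (Fx + lam / 2 * dist y x ^ 2 - Fy) 0 + max (-lam) 0 / 2 * dist y x ^ 2)
              / dist y x := by
            gcongr
            refine max_le ?_ ?_ <;>
              nlinarith [le_max_left (Fx + lam / 2 * dist y x ^ 2 - Fy) 0,
                le_max_right (Fx + lam / 2 * dist y x ^ 2 - Fy) 0, le_max_left (-lam) 0,
                le_max_right (-lam) 0, sq_nonneg (dist y x)]
        _ = _ := by field_simp
  · have : Continuous fun y => max (-lam) 0 / 2 * dist y x := by fun_prop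
    replace := this.tendsto x
    simpa using (ENNReal.tendsto_ofReal this).mono_left (nhdsWithin_le_nhds (s := {x}ᶜ))

lemma ofReal_div_le_descSlope {f : X → EReal} {x : X} {Fx : ℝ} (hx : f x = Fx) {γ : ℝ → X}
    {A C d : ℝ} (hA : 0 < A) (hd : 0 < d)
    (hγ : ∀ t ∈ Ioo (0:ℝ) 1, dist (γ t) x ≤ t * d ∧
      ∃ r : ℝ, f (γ t) = r ∧ t * A - C * t ^ 2 ≤ Fx - r) :
    ENNReal.ofReal (A / d) ≤ descSlope f x := by
  rw [descSlope, if_neg (by simp [hx])]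
  set g := fun y => ENNReal.ofReal (((f x - f y) ⊔ 0).toReal / dist y x)
  have hnear : ∀ᶠ t in 𝓝[>] (0:ℝ), t ∈ Ioo (0:ℝ) 1 ∧ 0 < A - C * t := by
    have : Continuous fun t : ℝ => A - C * t := by fun_prop
    have hA' : ∀ᶠ t in 𝓝 (0:ℝ), 0 < A - C * t :=
      continuousAt_const.eventually_lt this.continuousAt (by simpa using hA)
    exact Eventually.and (Ioo_mem_nhdsGT one_pos) (hA'.filter_mono nhdsWithin_le_nhds)
  have hbound : ∀ᶠ t in 𝓝[>] (0:ℝ), γ t ≠ x ∧ ENNReal.ofReal ((A - C * t) / d) ≤ g (γ t) := by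
    filter_upwards [hnear] with t ⟨ht, hpos⟩
    obtain ⟨hdist, r, hr, hdec⟩ := hγ t ht
    have hdec' : t * (A - C * t) ≤ Fx - r := by linarith
    have hr_lt : 0 < Fx - r := (mul_pos ht.1 hpos).trans_le hdec'
    have hne : γ t ≠ x := by
      rintro h
      rw [h, hx, EReal.coe_eq_coe_iff] at hr
      linarith
    refine ⟨hne, ENNReal.ofReal_le_ofReal ?_⟩
    simp only [hx, hr, ← EReal.coe_sub, EReal.toReal_coe_sup_zero, max_eq_left hr_lt.le]
    rw [div_le_div_iff₀ hd (dist_pos.2 hne)]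
    calc (A - C * t) * dist (γ t) x ≤ (A - C * t) * (t * d) :=
          mul_le_mul_of_nonneg_left hdist hpos.le
      _ = t * (A - C * t) * d := by ring
      _ ≤ (Fx - r) * d := mul_le_mul_of_nonneg_right hdec' hd.le
  have hγx : Tendsto γ (𝓝[>] 0) (𝓝[≠] x) := by
    refine tendsto_nhdsWithin_iff.2 ⟨?_, hbound.mono fun t h => h.1⟩
    rw [tendsto_iff_dist_tendsto_zero]
    refine squeeze_zero' (Eventually.of_forall fun t => dist_nonneg)
      (hnear.mono fun t h => (hγ t h.1).1) ?_
    have : Continuous fun t : ℝ => t * d := by fun_prop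
    simpa using (this.tendsto 0).mono_left nhdsWithin_le_nhds
  have hlim : Tendsto (fun t : ℝ => ENNReal.ofReal ((A - C * t) / d)) (𝓝[>] 0)
      (𝓝 (ENNReal.ofReal (A / d))) := by
    have : Continuous fun t : ℝ => (A - C * t) / d := by fun_prop
    simpa using ENNReal.tendsto_ofReal ((this.tendsto 0).mono_left nhdsWithin_le_nhds)
  calc ENNReal.ofReal (A / d) = limsup (fun t => ENNReal.ofReal ((A - C * t) / d)) (𝓝[>] 0) :=
        hlim.limsup_eq.symm
    _ ≤ limsup (g ∘ γ) (𝓝[>] 0) := limsup_le_limsup (hbound.mono fun t h => h.2)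
    _ ≤ limsup g (𝓝[≠] x) := by rw [limsup_comp]; exact limsup_le_limsup_of_le hγx

lemma AssumptionA1.exists_curve_decrease {f : X → EReal} {lam : ℝ} (hbot : ∀ x, f x ≠ ⊥)
    (hA1 : AssumptionA1 f lam) {x y : X} {Fx Fy : ℝ} (hx : f x = Fx) (hy : f y = Fy) :
    ∃ γ : ℝ → X, ∀ t ∈ Icc (0:ℝ) 1, dist (γ t) x ≤ t * dist y x ∧ ∃ r : ℝ, f (γ t) = r ∧
      t * (Fx + lam / 2 * dist y x ^ 2 - Fy) - (lam + max (-lam) 0) / 2 * dist y x ^ 2 * t ^ 2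
        ≤ Fx - r := by
  obtain ⟨γ, -, -, hγ⟩ := hA1 x y (by simp [hx]) (by simp [hy])
  refine ⟨γ, fun t ht => ?_⟩
  set d := dist y x
  set D := dist (γ t) x
  set m := max (-lam) 0
  have hm : 0 ≤ m := le_max_right _ _
  have hγ' : ∀ s, m < s → f (γ t) ≤ (((1 - t) * Fx + t * (Fy + d ^ 2 / (2 * s⁻¹))
      - (1 / 2) * (lam + 1 / s⁻¹) * t * (1 - t) * d ^ 2 - D ^ 2 / (2 * s⁻¹) : ℝ) : EReal) := by
    intro s hs
    have hs0 : 0 < s := hm.trans_lt hs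
    simpa [hx, hy, dist_comm x y] using
      hγ s⁻¹ (inv_pos.2 hs0) (by rwa [inv_mul_lt_one₀ hs0]) t ht
  obtain ⟨r, hr⟩ : ∃ r : ℝ, f (γ t) = r :=
    ⟨(f (γ t)).toReal, (EReal.coe_toReal ((hγ' (m + 1) (by linarith)).trans_lt
      (EReal.coe_lt_top _)).ne (hbot _)).symm⟩
  -- In the variable `s = 1/τ` the inequality of A1 is affine, and it holds for all `s > λ⁻`.
  have haffine : ∀ s, m < s →
      (t * (Fx - Fy) + lam / 2 * t * (1 - t) * d ^ 2) + s * ((D ^ 2 - t ^ 2 * d ^ 2) / 2)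
        ≤ Fx - r := by
    intro s hs
    have h := hγ' s hs
    rw [hr, EReal.coe_le_coe_iff] at h
    simp only [inv_inv, div_eq_mul_inv, mul_inv] at h
    linear_combination h
  obtain ⟨hb, hlim⟩ := nonpos_and_le_of_forall_lt_add_mul_le haffine
  refine ⟨?_, r, hr, ?_⟩
  · have htd : 0 ≤ t * d := mul_nonneg ht.1 dist_nonneg
    nlinarith [dist_nonneg (x := γ t) (y := x)]
  · nlinarith [mul_nonneg hm (sq_nonneg D)]

lemma globalSlope_le_descSlope {f : X → EReal} {lam : ℝ} (hbot : ∀ x, f x ≠ ⊥)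
    (hA1 : AssumptionA1 f lam) {x : X} {Fx : ℝ} (hx : f x = Fx) :
    globalSlope f lam x ≤ descSlope f x := by
  refine iSup₂_le fun y (hy : y ≠ x) => ?_
  cases hfy : f y with
  | bot => exact absurd hfy (hbot y)
  | top => simp [hx]
  | coe Fy =>
    rw [hx, ← EReal.coe_add, ← EReal.coe_sub, EReal.toReal_coe_sup_zero]
    rcases le_or_gt (Fx + lam / 2 * dist y x ^ 2 - Fy) 0 with hA | hA
    · simp [max_eq_right hA]
    rw [max_eq_left hA.le]
    obtain ⟨γ, hγ⟩ := hA1.exists_curve_decrease hbot hx hfy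
    exact ofReal_div_le_descSlope hx hA (dist_pos.2 hy) fun t ht => hγ t (Ioo_subset_Icc_self ht)

end Slope

/-- Global representation of the descending slope under Assumption A1. -/
theorem statement0 {X : Type*} [MetricSpace X] (f : X → EReal) (lam : ℝ)
    (hbot : ∀ x, f x ≠ ⊥) (hA1 : AssumptionA1 f lam)
    (x : X) (hx : f x ≠ ⊤) :
    descSlope f x = ⨆ y ∈ {y : X | y ≠ x},
      ENNReal.ofReal
        (((f x + ((lam / 2 * dist y x ^ 2 : ℝ) : EReal) - f y) ⊔ 0).toReal / dist y x) := by
  obtain ⟨Fx, hFx⟩ : ∃ r : ℝ, f x = r := ⟨_, (EReal.coe_toReal hx (hbot x)).symm⟩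
  exact le_antisymm (descSlope_le_globalSlope hFx lam) (globalSlope_le_descSlope hbot hA1 hFx)
end

section
/- Let (X,d) be a metric space and let f : X → ℝ ∪ {+∞} satisfy Assumption A1 for some λ ∈ ℝ. Assume there exists x̄ ∈ D(f) such that m := inf over the closed ball of radius 1 centered at x̄ of f is finite. Then for every y ∈ X, f(y) ≥ (λ/2) d(y,x̄)² + ( m − f(x̄) − λ⁺/2 ) d(y,x̄) + m, where λ⁺ = max(λ,0). -/
open Filter Topology MeasureTheory
open scoped ENNReal NNReal Classical

/-!
Apply Assumption A1 with `x₀ = x̄`, `x₁ = y`, at `t = 1 / d(y, x̄)` when `d(y, x̄) > 1`. Written in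
`s = 1/τ`, its right-hand side is affine in `s ∈ (λ⁻, ∞)`; letting `s → ∞` shows that
`d(γ t, x̄) ≤ t d(y, x̄) = 1`, so `f (γ t) ≥ m`, and letting `s ↓ λ⁻` then bounds `m` by a
convex combination of `f x̄` and `f y` up to `λ`-terms. Multiplying by `d(y, x̄)` gives the claim.
Inside the unit ball it follows from `f y ≥ m` alone.
-/

theorem nonneg_and_le_of_forall_gt_le_add_mul {r a b N : ℝ}
    (h : ∀ s, N < s → r ≤ a + b * s) : 0 ≤ b ∧ r ≤ a + b * N := by
  refine ⟨?_, ?_⟩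
  · by_contra! hb
    have hlim : Tendsto (fun s => a + b * s) atTop atBot :=
      tendsto_atBot_add_const_left _ a (tendsto_id.const_mul_atTop_of_neg hb)
    obtain ⟨s, hs, hsr⟩ := ((eventually_gt_atTop N).and (hlim.eventually_lt_atBot r)).exists
    exact (h s hs).not_gt hsr
  · have hcont : Tendsto (fun s => a + b * s) (𝓝[>] N) (𝓝 (a + b * N)) :=
      ((continuous_const.add (continuous_const.mul continuous_id)).tendsto N).mono_left
        nhdsWithin_le_nhds
    exact ge_of_tendsto hcont (eventually_nhdsWithin_of_forall h)

theorem AssumptionA1.exists_dist_le_and_le {X : Type*} [MetricSpace X] {f : X → EReal}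
    {lam : ℝ} (hA1 : AssumptionA1 f lam) (hbot : ∀ x, f x ≠ ⊥) {x₀ x₁ : X} (h₀ : f x₀ ≠ ⊤)
    (h₁ : f x₁ ≠ ⊤) {t : ℝ} (ht : t ∈ Set.Icc (0 : ℝ) 1) :
    ∃ z, dist z x₀ ≤ t * dist x₀ x₁ ∧
      f z ≤ (((1 - t) * (f x₀).toReal + t * (f x₁).toReal
        - lam / 2 * t * (1 - t) * dist x₀ x₁ ^ 2 + max (-lam) 0 / 2 * (t * dist x₀ x₁) ^ 2 : ℝ)
        : EReal) := by
  obtain ⟨γ, -, -, hγ⟩ := hA1 x₀ x₁ h₀ h₁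
  set N := max (-lam) 0
  set d := dist x₀ x₁
  set c := dist (γ t) x₀
  set a := (1 - t) * (f x₀).toReal + t * (f x₁).toReal - lam / 2 * t * (1 - t) * d ^ 2
  have hA1s : ∀ s, N < s →
      f (γ t) ≤ ((a + ((t * d) ^ 2 - c ^ 2) / 2 * s : ℝ) : EReal) := by
    intro s hs
    have hs0 : 0 < s := (le_max_right _ _).trans_lt hs
    have h := hγ s⁻¹ (inv_pos.2 hs0) (by rwa [inv_mul_lt_iff₀ hs0, mul_one]) t ht
    rw [dist_comm x₁ x₀] at h
    convert h using 2
    field_simp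
    ring
  obtain ⟨r, hr⟩ : ∃ r : ℝ, f (γ t) = r :=
    ⟨_, (EReal.coe_toReal (ne_top_of_le_ne_top (EReal.coe_ne_top _)
      (hA1s (N + 1) (lt_add_one N))) (hbot _)).symm⟩
  simp only [hr, EReal.coe_le_coe_iff] at hA1s
  obtain ⟨hb, hle⟩ := nonneg_and_le_of_forall_gt_le_add_mul hA1s
  refine ⟨γ t, ?_, ?_⟩
  · exact (sq_le_sq₀ dist_nonneg (mul_nonneg ht.1 dist_nonneg)).1 (by linarith)
  · rw [hr, EReal.coe_le_coe_iff]
    nlinarith [sq_nonneg c, le_max_right (-lam) 0]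

theorem AssumptionA1.mul_dist_le {X : Type*} [MetricSpace X] {f : X → EReal} {lam : ℝ}
    (hA1 : AssumptionA1 f lam) (hbot : ∀ x, f x ≠ ⊥) {x₀ x₁ : X} (h₀ : f x₀ ≠ ⊤) (h₁ : f x₁ ≠ ⊤)
    {m : ℝ} (hm : ∀ z ∈ Metric.closedBall x₀ 1, (m : EReal) ≤ f z) (hD : 1 ≤ dist x₁ x₀) :
    m * dist x₁ x₀ ≤ (dist x₁ x₀ - 1) * (f x₀).toReal + (f x₁).toReal
      - lam / 2 * (dist x₁ x₀ - 1) * dist x₁ x₀ + max (-lam) 0 / 2 * dist x₁ x₀ := by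
  set D := dist x₁ x₀ with hD_def
  have hD0 : 0 < D := one_pos.trans_le hD
  have ht : 1 / D ∈ Set.Icc (0 : ℝ) 1 := ⟨by positivity, (div_le_one hD0).2 hD⟩
  obtain ⟨z, hz, hfz⟩ := hA1.exists_dist_le_and_le hbot h₀ h₁ ht
  rw [dist_comm x₀ x₁, ← hD_def, one_div_mul_cancel hD0.ne'] at hz hfz
  have hmz := (hm z (Metric.mem_closedBall.2 hz)).trans hfz
  rw [EReal.coe_le_coe_iff] at hmz
  have := mul_le_mul_of_nonneg_right hmz hD0.le
  field_simp at this ⊢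
  linarith

/-- Lower bound for functions satisfying Assumption A1 which are bounded below near a point of
the effective domain. -/
theorem statement1 {X : Type*} [MetricSpace X] (f : X → EReal) (lam : ℝ)
    (hbot : ∀ x, f x ≠ ⊥) (hA1 : AssumptionA1 f lam)
    (xbar : X) (hxbar : f xbar ≠ ⊤) (m : ℝ)
    (hm : (⨅ y ∈ Metric.closedBall xbar 1, f y) = (m : EReal)) :
    ∀ y : X,
      ((lam / 2 * dist y xbar ^ 2
        + (m - (f xbar).toReal - max lam 0 / 2) * dist y xbar + m : ℝ) : EReal) ≤ f y := by
  intro y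
  obtain hy | hy := eq_or_ne (f y) ⊤
  · simp [hy]
  have hball : ∀ z ∈ Metric.closedBall xbar 1, (m : EReal) ≤ f z := fun z hz => hm ▸ iInf₂_le z hz
  have hmF : m ≤ (f xbar).toReal := by
    simpa using EReal.toReal_le_toReal (hball xbar (Metric.mem_closedBall_self zero_le_one))
      (EReal.coe_ne_bot m) hxbar
  rw [← EReal.coe_toReal hy (hbot y), EReal.coe_le_coe_iff]
  have hD0 : 0 ≤ dist y xbar := dist_nonneg
  rcases le_or_gt (dist y xbar) 1 with hD1 | hD1
  · have hmy : m ≤ (f y).toReal := by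
      simpa using EReal.toReal_le_toReal (hball y (Metric.mem_closedBall.2 hD1))
        (EReal.coe_ne_bot m) hy
    nlinarith [mul_nonneg (sub_nonneg.2 (le_max_left lam 0)) (sq_nonneg (dist y xbar)),
      mul_nonneg (le_max_right lam 0) (mul_nonneg hD0 (sub_nonneg.2 hD1)),
      mul_nonneg (sub_nonneg.2 hmF) hD0]
  · have hmD := hA1.mul_dist_le hbot hxbar hy hball hD1.le
    have hmax : max lam 0 = lam + max (-lam) 0 := by
      rcases le_total lam 0 with h | h <;> simp [h]
    rw [hmax]
    linarith
end

section
/- Let X be a real Hilbert space and let {x_h} ⊆ X be a bounded sequence and x ∈ X. Then x_h converges weakly to x in the Hilbert space sense (⟨x_h, y⟩ → ⟨x, y⟩ for all y ∈ X) if and only if for every subsequence {x_{h_k}}, the point x is the unique minimizer of y ↦ limsup_k ‖y − x_{h_k}‖². -/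
/-!
Expanding the square around `x` gives, for every `y` and every term `v` of the sequence,
`‖y - v‖² = ‖x - v‖² + ‖y - x‖² - 2⟪v - x, y - x⟫`.
If `u ⇀ x`, the inner product term tends to `0` along every subsequence, so
`limsup ‖y - u_{φ k}‖² = limsup ‖x - u_{φ k}‖² + ‖y - x‖²`, and `x` is the unique minimizer.
Conversely, if `⟪u n, y⟫` does not tend to `⟪x, y⟫`, some subsequence satisfies
`ε ≤ ⟪u_{φ k} - x, z⟫` with `z = ±y`; then moving from `x` a short step `t = ε / ‖z‖²` in the
direction `z` lowers every term `‖x - u_{φ k}‖²` by `ε² / ‖z‖²`, so `x` is not a minimizer.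
-/

open Filter Topology MeasureTheory
open scoped ENNReal NNReal Classical

open scoped InnerProductSpace

lemma limsup_add_eq_of_tendsto {ι α : Type*} [AddCommGroup α] [ConditionallyCompleteLinearOrder α]
    [DenselyOrdered α] [AddLeftMono α] [TopologicalSpace α] [OrderTopology α]
    {l : Filter ι} [l.NeBot] {u v : ι → α} {L : α}
    (hu_le : IsBoundedUnder (· ≤ ·) l u) (hu_ge : IsBoundedUnder (· ≥ ·) l u)
    (hv : Tendsto v l (𝓝 L)) :
    limsup (u + v) l = limsup u l + L := by
  apply le_antisymm
  · simpa only [hv.limsup_eq] using limsup_add_le hu_ge hu_le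
      hv.isBoundedUnder_ge.isCoboundedUnder_le hv.isBoundedUnder_le
  · simpa only [hv.liminf_eq] using le_limsup_add hu_le hu_ge.isCoboundedUnder_le
      hv.isBoundedUnder_le hv.isBoundedUnder_ge

section Bounded

variable {E ι : Type*} [SeminormedAddCommGroup E] {l : Filter ι} {v : ι → E}

lemma isBoundedUnder_le_norm_sub_sq {R : ℝ} (hv : ∀ n, ‖v n‖ ≤ R) (y : E) :
    IsBoundedUnder (· ≤ ·) l fun n => ‖y - v n‖ ^ 2 :=
  isBoundedUnder_of ⟨(‖y‖ + R) ^ 2, fun n => by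
    gcongr
    exact (norm_sub_le _ _).trans (by linarith [hv n])⟩

lemma isBoundedUnder_ge_norm_sub_sq (y : E) :
    IsBoundedUnder (· ≥ ·) l fun n => ‖y - v n‖ ^ 2 :=
  isBoundedUnder_of ⟨0, fun _ => sq_nonneg _⟩

end Bounded

section InnerProductSpace

variable {H : Type*} [NormedAddCommGroup H] [InnerProductSpace ℝ H]

lemma norm_sub_sq_eq_norm_sub_sq_add (x y v : H) :
    ‖y - v‖ ^ 2 = ‖x - v‖ ^ 2 + (‖y - x‖ ^ 2 - 2 * ⟪v - x, y - x⟫_ℝ) := by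
  rw [show y - v = (y - x) - (v - x) by abel, norm_sub_sq_real, ← norm_neg (x - v), neg_sub,
    real_inner_comm]
  ring

lemma exists_subseq_le_inner_sub_of_not_tendsto {u : ℕ → H} {x y : H}
    (h : ¬ Tendsto (fun n => ⟪u n, y⟫_ℝ) atTop (𝓝 ⟪x, y⟫_ℝ)) :
    ∃ z : H, ∃ ε > 0, ∃ φ : ℕ → ℕ, StrictMono φ ∧ ∀ k, ε ≤ ⟪u (φ k) - x, z⟫_ℝ := by
  rw [Metric.tendsto_atTop] at h
  push Not at h
  obtain ⟨ε, hε, hfar⟩ := h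
  have hfreq : (∃ᶠ n in atTop, ε ≤ ⟪u n - x, y⟫_ℝ) ∨ ∃ᶠ n in atTop, ε ≤ ⟪u n - x, -y⟫_ℝ := by
    refine frequently_or_distrib.mp (frequently_atTop.mpr fun N => ?_)
    obtain ⟨n, hn, hdist⟩ := hfar N
    rw [Real.dist_eq, ← inner_sub_left] at hdist
    exact ⟨n, hn, by simpa only [inner_neg_right] using le_abs.mp hdist⟩
  rcases hfreq with hfreq | hfreq
  · obtain ⟨φ, hφ, hle⟩ := extraction_of_frequently_atTop hfreq
    exact ⟨y, ε, hε, φ, hφ, hle⟩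
  · obtain ⟨φ, hφ, hle⟩ := extraction_of_frequently_atTop hfreq
    exact ⟨-y, ε, hε, φ, hφ, hle⟩

variable {ι : Type*} {l : Filter ι} {v : ι → H} {R : ℝ} [l.NeBot]

lemma limsup_norm_sub_sq_eq_of_tendsto_inner (hv : ∀ n, ‖v n‖ ≤ R) {x y : H}
    (hxy : Tendsto (fun n => ⟪v n, y - x⟫_ℝ) l (𝓝 ⟪x, y - x⟫_ℝ)) :
    limsup (fun n => ‖y - v n‖ ^ 2) l = limsup (fun n => ‖x - v n‖ ^ 2) l + ‖y - x‖ ^ 2 := by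
  have hvx : Tendsto (fun n => ‖y - x‖ ^ 2 - 2 * ⟪v n - x, y - x⟫_ℝ) l (𝓝 (‖y - x‖ ^ 2)) := by
    have h0 : Tendsto (fun n => ⟪v n - x, y - x⟫_ℝ) l (𝓝 0) := by
      simpa only [inner_sub_left, sub_self] using hxy.sub_const ⟪x, y - x⟫_ℝ
    simpa using tendsto_const_nhds.sub (h0.const_mul 2)
  rw [show (fun n => ‖y - v n‖ ^ 2) = (fun n => ‖x - v n‖ ^ 2) + _ from
    funext fun n => norm_sub_sq_eq_norm_sub_sq_add x y (v n)]
  exact limsup_add_eq_of_tendsto (isBoundedUnder_le_norm_sub_sq hv x)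
    (isBoundedUnder_ge_norm_sub_sq x) hvx

lemma exists_limsup_norm_sub_sq_lt_of_le_inner (hv : ∀ n, ‖v n‖ ≤ R) {x z : H} {ε : ℝ}
    (hε : 0 < ε) (hz : ∀ n, ε ≤ ⟪v n - x, z⟫_ℝ) :
    ∃ y : H, limsup (fun n => ‖y - v n‖ ^ 2) l < limsup (fun n => ‖x - v n‖ ^ 2) l := by
  have hz0 : z ≠ 0 := by
    rintro rfl
    obtain ⟨n⟩ := l.nonempty_of_neBot
    simpa [hε.not_ge] using hz n
  have hz2 : 0 < ‖z‖ ^ 2 := by positivity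
  set t := ε / ‖z‖ ^ 2
  -- this choice of `t` minimizes `t² ‖z‖² - 2 t ε`, with value `-ε² / ‖z‖²`
  have hdecr : ∀ n, ‖(x + t • z) - v n‖ ^ 2 ≤ ‖x - v n‖ ^ 2 + -(ε ^ 2 / ‖z‖ ^ 2) := by
    intro n
    have hnorm : ‖t • z‖ ^ 2 = t ^ 2 * ‖z‖ ^ 2 := by
      rw [norm_smul, mul_pow, Real.norm_eq_abs, sq_abs]
    have hinner : t * ε ≤ ⟪v n - x, t • z⟫_ℝ := by
      rw [real_inner_smul_right]
      exact mul_le_mul_of_nonneg_left (hz n) (by positivity)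
    rw [norm_sub_sq_eq_norm_sub_sq_add x, add_sub_cancel_left, hnorm]
    have ht : t ^ 2 * ‖z‖ ^ 2 - 2 * (t * ε) = -(ε ^ 2 / ‖z‖ ^ 2) := by
      simp only [t]
      field_simp
      ring
    linarith
  refine ⟨x + t • z, ?_⟩
  calc limsup (fun n => ‖(x + t • z) - v n‖ ^ 2) l
      ≤ limsup (fun n => ‖x - v n‖ ^ 2 + -(ε ^ 2 / ‖z‖ ^ 2)) l :=
        limsup_le_limsup (Eventually.of_forall hdecr)
          (isBoundedUnder_ge_norm_sub_sq _).isCoboundedUnder_le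
          (isBoundedUnder_le_add (isBoundedUnder_le_norm_sub_sq hv x) isBoundedUnder_const)
    _ = limsup (fun n => ‖x - v n‖ ^ 2) l + -(ε ^ 2 / ‖z‖ ^ 2) :=
        limsup_add_const _ _ _ (isBoundedUnder_le_norm_sub_sq hv x)
          (isBoundedUnder_ge_norm_sub_sq x).isCoboundedUnder_le
    _ < limsup (fun n => ‖x - v n‖ ^ 2) l := by
        have : 0 < ε ^ 2 / ‖z‖ ^ 2 := by positivity
        linarith

end InnerProductSpace

open scoped InnerProductSpace in
theorem statement5_general {H : Type*} [NormedAddCommGroup H] [InnerProductSpace ℝ H]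
    (u : ℕ → H) (x : H) (hb : ∃ R : ℝ, ∀ n, ‖u n‖ ≤ R) :
    (∀ y : H, Filter.Tendsto (fun n => ⟪u n, y⟫_ℝ) Filter.atTop (𝓝 ⟪x, y⟫_ℝ)) ↔
      (∀ φ : ℕ → ℕ, StrictMono φ →
        (∀ y : H, Filter.limsup (fun k => ‖x - u (φ k)‖ ^ 2) Filter.atTop ≤
            Filter.limsup (fun k => ‖y - u (φ k)‖ ^ 2) Filter.atTop) ∧
        (∀ y : H, Filter.limsup (fun k => ‖y - u (φ k)‖ ^ 2) Filter.atTop ≤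
            Filter.limsup (fun k => ‖x - u (φ k)‖ ^ 2) Filter.atTop → y = x)) := by
  obtain ⟨R, hR⟩ := hb
  constructor
  · intro hweak φ hφ
    have hcentre (y : H) := limsup_norm_sub_sq_eq_of_tendsto_inner (l := atTop)
      (fun k => hR (φ k)) ((hweak (y - x)).comp hφ.tendsto_atTop)
    refine ⟨fun y => ?_, fun y hy => ?_⟩
    · rw [hcentre y]
      exact le_add_of_nonneg_right (sq_nonneg _)
    · rw [hcentre y, add_le_iff_nonpos_right] at hy
      exact sub_eq_zero.mp <| norm_eq_zero.mp <|
        (pow_eq_zero_iff two_ne_zero).mp (hy.antisymm (sq_nonneg _))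
  · intro hmin y
    by_contra hy
    obtain ⟨z, ε, hε, φ, hφ, hz⟩ := exists_subseq_le_inner_sub_of_not_tendsto hy
    obtain ⟨w, hw⟩ :=
      exists_limsup_norm_sub_sq_lt_of_le_inner (l := atTop) (fun k => hR (φ k)) hε hz
    exact ((hmin φ hφ).1 w).not_gt hw

open scoped InnerProductSpace in
/-- In a Hilbert space, weak convergence of a bounded sequence coincides with the condition
that the limit is the asymptotic centre (unique minimizer of `y ↦ limsup ‖y - x_{h_k}‖²`) of
every subsequence. -/
theorem statement5 {H : Type*} [NormedAddCommGroup H] [InnerProductSpace ℝ H]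
    [CompleteSpace H] (u : ℕ → H) (x : H) (hb : ∃ R : ℝ, ∀ n, ‖u n‖ ≤ R) :
    (∀ y : H, Filter.Tendsto (fun n => ⟪u n, y⟫_ℝ) Filter.atTop (𝓝 ⟪x, y⟫_ℝ)) ↔
      (∀ φ : ℕ → ℕ, StrictMono φ →
        (∀ y : H, Filter.limsup (fun k => ‖x - u (φ k)‖ ^ 2) Filter.atTop ≤
            Filter.limsup (fun k => ‖y - u (φ k)‖ ^ 2) Filter.atTop) ∧
        (∀ y : H, Filter.limsup (fun k => ‖y - u (φ k)‖ ^ 2) Filter.atTop ≤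
            Filter.limsup (fun k => ‖x - u (φ k)‖ ^ 2) Filter.atTop → y = x)) :=
  statement5_general u x hb
end

section
/- Let (X,d) be an Hadamard space and let f : X → ℝ ∪ {+∞} be proper, λ-convex and lower semicontinuous for some λ ∈ ℝ. Then for every 0 < ν < μ < 1/(2λ⁻) (with 1/(2λ⁻) = +∞ if λ ≥ 0) and every x ∈ X, the (single-valued) resolvents satisfy d(J_ν^f x, J_μ^f x) ≤ ( (μ − ν) / ( (1 + λμ) √(1 − 2λ⁻ν) ) ) · |∂f|(x), where λ⁻ = max(−λ,0). -/
open Filter Topology MeasureTheory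
open scoped ENNReal NNReal Classical

section Aux
variable {X : Type*} [MetricSpace X]

/-- convexity gives finiteness along the geodesic, and a real inequality. -/
lemma conv_real (f : X → EReal) (lam : ℝ) (hbot : ∀ x, f x ≠ ⊥)
    (hconv : LambdaConvex f lam) (γ : ℝ → X) (hγ : IsGeodesic γ)
    (h0 : f (γ 0) ≠ ⊤) (h1 : f (γ 1) ≠ ⊤) (t : ℝ) (ht : t ∈ Set.Icc (0:ℝ) 1) :
    f (γ t) ≠ ⊤ ∧ (f (γ t)).toReal ≤ (1 - t) * (f (γ 0)).toReal + t * (f (γ 1)).toReal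
      - lam / 2 * t * (1 - t) * dist (γ 0) (γ 1) ^ 2 := by
  have hcv := hconv γ hγ t ht
  set F0 := (f (γ 0)).toReal
  set F1 := (f (γ 1)).toReal
  rw [← EReal.coe_toReal h0 (hbot _), ← EReal.coe_toReal h1 (hbot _)] at hcv
  have hcv' : f (γ t) ≤ (((1 - t) * F0 + t * F1
      - lam / 2 * t * (1 - t) * dist (γ 0) (γ 1) ^ 2 : ℝ) : EReal) := by
    refine hcv.trans_eq ?_
    norm_cast
  have hT : f (γ t) ≠ ⊤ := by
    intro h
    rw [h] at hcv'
    exact (not_lt.2 hcv') (EReal.coe_lt_top _)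
  refine ⟨hT, ?_⟩
  rw [← EReal.coe_toReal hT (hbot _)] at hcv'
  exact_mod_cast hcv'

/-- The variational inequality for points of the resolvent set. -/
lemma resolv_VI (hX : IsCAT0 X) (f : X → EReal) (lam : ℝ)
    (hbot : ∀ x, f x ≠ ⊥) (hconv : LambdaConvex f lam)
    (τ : ℝ) (hτ : 0 < τ) (x w : X) (hw : w ∈ resolvSet f τ x)
    (hwT : f w ≠ ⊤) (y : X) (hyT : f y ≠ ⊤) :
    (f w).toReal + (lam / 2 + 1 / (2 * τ)) * dist w y ^ 2
      ≤ (f y).toReal + (dist y x ^ 2 - dist w x ^ 2) / (2 * τ) := by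
  obtain ⟨γ, hγ, hγ0, hγ1⟩ := hX.1 w y
  have h0T : f (γ 0) ≠ ⊤ := by rw [hγ0]; exact hwT
  have h1T : f (γ 1) ≠ ⊤ := by rw [hγ1]; exact hyT
  set Fw := (f w).toReal
  set Fy := (f y).toReal
  set D := dist w y
  set A := dist w x
  set B := dist y x
  -- key inequality at each t ∈ (0,1)
  have key : ∀ t ∈ Set.Ioo (0:ℝ) 1,
      Fw + (lam / 2 + 1 / (2 * τ)) * (1 - t) * D ^ 2
        ≤ Fy + (B ^ 2 - A ^ 2) / (2 * τ) := by
    intro t ht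
    have htI : t ∈ Set.Icc (0:ℝ) 1 := ⟨ht.1.le, ht.2.le⟩
    obtain ⟨htT, hcv⟩ := conv_real f lam hbot hconv γ hγ h0T h1T t htI
    have hcat := hX.2 x γ hγ t htI
    have hmin := hw (γ t)
    rw [← EReal.coe_toReal hwT (hbot _), ← EReal.coe_toReal htT (hbot _)] at hmin
    have hmin' : Fw + A ^ 2 / (2 * τ)
        ≤ (f (γ t)).toReal + dist (γ t) x ^ 2 / (2 * τ) := by exact_mod_cast hmin
    rw [hγ0, hγ1] at hcv hcat
    rw [dist_comm x (γ t), dist_comm x w, dist_comm x y] at hcat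
    have hDd : dist w y = D := rfl
    -- combine
    have hcomb : Fw + A ^ 2 / (2 * τ)
        ≤ (1 - t) * Fw + t * Fy - lam / 2 * t * (1 - t) * D ^ 2
          + ((1 - t) * A ^ 2 + t * B ^ 2 - t * (1 - t) * D ^ 2) / (2 * τ) := by
      have h3 : dist (γ t) x ^ 2 / (2 * τ)
          ≤ ((1 - t) * A ^ 2 + t * B ^ 2 - t * (1 - t) * D ^ 2) / (2 * τ) := by
        gcongr
      linarith [hmin', hcv, h3]
    -- divide by t
    have ht0 : 0 < t := ht.1
    set expr := Fw + (lam / 2 + 1 / (2 * τ)) * (1 - t) * D ^ 2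
        - Fy - (B ^ 2 - A ^ 2) / (2 * τ) with hexprdef
    have hid : t * expr
        = (Fw + A ^ 2 / (2 * τ)) - ((1 - t) * Fw + t * Fy - lam / 2 * t * (1 - t) * D ^ 2
          + ((1 - t) * A ^ 2 + t * B ^ 2 - t * (1 - t) * D ^ 2) / (2 * τ)) := by
      rw [hexprdef]; ring
    have hstep : t * expr ≤ t * 0 := by rw [mul_zero, hid]; linarith
    have hexpr : expr ≤ 0 := le_of_mul_le_mul_left hstep ht0
    rw [hexprdef] at hexpr
    linarith
  -- pass to the limit t → 0⁺
  have hlim : Tendsto (fun t : ℝ => Fw + (lam / 2 + 1 / (2 * τ)) * (1 - t) * D ^ 2)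
      (𝓝[>] (0:ℝ)) (𝓝 (Fw + (lam / 2 + 1 / (2 * τ)) * (1 - 0) * D ^ 2)) := by
    apply Tendsto.mono_left _ nhdsWithin_le_nhds
    exact (Continuous.tendsto (by continuity) 0)
  have hev : ∀ᶠ t in 𝓝[>] (0:ℝ),
      Fw + (lam / 2 + 1 / (2 * τ)) * (1 - t) * D ^ 2 ≤ Fy + (B ^ 2 - A ^ 2) / (2 * τ) := by
    filter_upwards [Ioo_mem_nhdsGT_of_mem (by simp : (0:ℝ) ∈ Set.Ico (0:ℝ) 1)] with t ht
    exact key t ht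
  have := le_of_tendsto hlim hev
  simpa using this

end Aux

section Slope
variable {X : Type*} [MetricSpace X]

lemma slope_lb (hX : IsCAT0 X) (f : X → EReal) (lam : ℝ)
    (hbot : ∀ x, f x ≠ ⊥) (hconv : LambdaConvex f lam)
    (x y : X) (hxT : f x ≠ ⊤) (hyT : f y ≠ ⊤)
    (S : ℝ) (hS0 : 0 ≤ S) (hS : descSlope f x ≤ ENNReal.ofReal S) :
    (f x).toReal - (f y).toReal + lam / 2 * dist x y ^ 2 ≤ S * dist x y := by
  rcases eq_or_ne x y with rfl | hxy
  · simp
  have hd : 0 < dist x y := dist_pos.2 hxy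
  obtain ⟨γ, hγ, hγ0, hγ1⟩ := hX.1 x y
  set d := dist x y with hdd
  set Fx := (f x).toReal with hFx
  set Fy := (f y).toReal with hFy
  set q : ℝ → ℝ := fun t => (Fx - Fy + lam / 2 * (1 - t) * d ^ 2) / d with hq
  set h : X → ℝ≥0∞ := fun z => ENNReal.ofReal (((f x - f z) ⊔ 0).toReal / dist z x) with hh
  have hIoo : Set.Ioo (0:ℝ) 1 ∈ 𝓝[>] (0:ℝ) :=
    Ioo_mem_nhdsGT_of_mem (by simp : (0:ℝ) ∈ Set.Ico (0:ℝ) 1)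
  have hdist : ∀ t ∈ Set.Ioo (0:ℝ) 1, dist (γ t) x = t * d := by
    intro t ht
    have h1 := hγ t ⟨ht.1.le, ht.2.le⟩ 0 ⟨le_refl 0, zero_le_one⟩
    rw [hγ0, hγ1] at h1
    rw [h1, sub_zero, abs_of_pos ht.1]
  -- eventual lower bound
  have hev : ∀ᶠ t in 𝓝[>] (0:ℝ), ENNReal.ofReal (q t) ≤ h (γ t) := by
    filter_upwards [hIoo] with t ht
    have htI : t ∈ Set.Icc (0:ℝ) 1 := ⟨ht.1.le, ht.2.le⟩
    obtain ⟨htT, hcv⟩ := conv_real f lam hbot hconv γ hγ (hγ0 ▸ hxT) (hγ1 ▸ hyT) t htI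
    rw [hγ0, hγ1] at hcv
    set Ft := (f (γ t)).toReal with hFt
    have hnum : ((f x - f (γ t)) ⊔ 0).toReal = max (Fx - Ft) 0 := by
      rw [← EReal.coe_toReal hxT (hbot x), ← EReal.coe_toReal htT (hbot _), ← hFx, ← hFt,
        ← EReal.coe_sub]
      rcases le_total (Fx - Ft) 0 with hc | hc
      · rw [sup_eq_right.2 (EReal.coe_nonpos.2 hc), sup_eq_right.2 hc, EReal.toReal_zero]
      · rw [sup_eq_left.2 (EReal.coe_nonneg.2 hc), sup_eq_left.2 hc, EReal.toReal_coe]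
    have htd : 0 < t * d := mul_pos ht.1 hd
    have hqle : q t ≤ max (Fx - Ft) 0 / (t * d) := by
      rw [le_div_iff₀ htd, hq]
      have hqq : (Fx - Fy + lam / 2 * (1 - t) * d ^ 2) / d * (t * d)
          = t * (Fx - Fy + lam / 2 * (1 - t) * d ^ 2) := by
        field_simp
      rw [hqq]
      have : t * (Fx - Fy + lam / 2 * (1 - t) * d ^ 2) ≤ Fx - Ft := by nlinarith [hcv]
      exact this.trans (le_max_left _ _)
    rw [hh]
    simp only
    rw [hnum, hdist t ht]
    exact ENNReal.ofReal_le_ofReal hqle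
  -- the curve tends to x within {≠ x}
  have htend : Filter.Tendsto γ (𝓝[>] (0:ℝ)) (𝓝[≠] x) := by
    rw [tendsto_nhdsWithin_iff]
    constructor
    · rw [tendsto_iff_dist_tendsto_zero]
      have h2 : Filter.Tendsto (fun t : ℝ => t * d) (𝓝[>] (0:ℝ)) (𝓝 0) := by
        have := (tendsto_id.mul_const d : Filter.Tendsto (fun t : ℝ => t * d) (𝓝 0) (𝓝 (0 * d)))
        rw [zero_mul] at this
        exact this.mono_left nhdsWithin_le_nhds
      refine h2.congr' ?_
      filter_upwards [hIoo] with t ht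
      exact (hdist t ht).symm
    · filter_upwards [hIoo] with t ht
      intro hc
      have := hdist t ht
      rw [hc, dist_self] at this
      nlinarith [mul_pos ht.1 hd]
  -- chain of (lim)sups
  have hchain : ENNReal.ofReal (q 0) ≤ descSlope f x := by
    rw [descSlope, if_neg hxT]
    have e1 : Filter.liminf (fun t => ENNReal.ofReal (q t)) (𝓝[>] (0:ℝ))
        = ENNReal.ofReal (q 0) := by
      refine Filter.Tendsto.liminf_eq ?_
      refine (ENNReal.continuous_ofReal.tendsto _).comp ?_
      have hqc : Continuous q := by
        rw [hq]; fun_prop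
      exact (hqc.tendsto 0).mono_left nhdsWithin_le_nhds
    calc ENNReal.ofReal (q 0)
        = Filter.liminf (fun t => ENNReal.ofReal (q t)) (𝓝[>] (0:ℝ)) := e1.symm
      _ ≤ Filter.liminf (h ∘ γ) (𝓝[>] (0:ℝ)) := Filter.liminf_le_liminf hev
      _ ≤ Filter.limsup (h ∘ γ) (𝓝[>] (0:ℝ)) := Filter.liminf_le_limsup
      _ = Filter.limsup h (Filter.map γ (𝓝[>] (0:ℝ))) := rfl
      _ ≤ Filter.limsup h (𝓝[≠] x) := Filter.limsup_le_limsup_of_le htend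
  have hq0 : q 0 ≤ S := by
    have := hchain.trans hS
    exact (ENNReal.ofReal_le_ofReal_iff hS0).1 this
  have hq0' : (Fx - Fy + lam / 2 * (1 - 0) * d ^ 2) / d ≤ S := hq0
  rw [div_le_iff₀ hd] at hq0'
  nlinarith [hq0']

end Slope

set_option maxHeartbeats 1000000

/-- Quantitative continuity in `τ` of the resolvent map, in terms of the slope. -/
theorem statement7 {X : Type*} [MetricSpace X] [CompleteSpace X] (hX : IsCAT0 X)
    (f : X → EReal) (lam : ℝ)
    (hbot : ∀ x, f x ≠ ⊥) (hproper : ∃ x, f x ≠ ⊤)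
    (hconv : LambdaConvex f lam) (hlsc : LowerSemicontinuous f)
    (ν μ : ℝ) (hν : 0 < ν) (hνμ : ν < μ) (hμlam : 2 * max (-lam) 0 * μ < 1)
    (x u v : X) (hu : u ∈ resolvSet f ν x) (hv : v ∈ resolvSet f μ x) :
    ENNReal.ofReal (dist u v) ≤
      ENNReal.ofReal ((μ - ν) / ((1 + lam * μ) * Real.sqrt (1 - 2 * max (-lam) 0 * ν)))
        * descSlope f x := by
  set lamm := max (-lam) 0 with hlamm
  have hμ : 0 < μ := hν.trans hνμ
  have hlamm0 : 0 ≤ lamm := le_max_right _ _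
  have hlamlamm : -lam ≤ lamm := le_max_left _ _
  have hlammν : lamm * ν ≤ lamm * μ := by nlinarith
  have hPμ : 0 < 1 + lam * μ := by nlinarith
  have hPν : 0 < 1 + lam * ν := by nlinarith
  have hrad : 0 < 1 - 2 * lamm * ν := by nlinarith
  have hsqrt : 0 < Real.sqrt (1 - 2 * lamm * ν) := Real.sqrt_pos.2 hrad
  have hconst : 0 < (μ - ν) / ((1 + lam * μ) * Real.sqrt (1 - 2 * lamm * ν)) :=
    div_pos (by linarith) (mul_pos hPμ hsqrt)
  by_cases hxT : f x = ⊤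
  · have hDS : descSlope f x = ⊤ := by rw [descSlope, if_pos hxT]
    rw [hDS, ENNReal.mul_top (ENNReal.ofReal_pos.2 hconst).ne']
    exact le_top
  by_cases hST : descSlope f x = ⊤
  · rw [hST, ENNReal.mul_top (ENNReal.ofReal_pos.2 hconst).ne']
    exact le_top
  -- finiteness of f u, f v
  have hfin : ∀ (τ : ℝ) (w : X), w ∈ resolvSet f τ x → f w ≠ ⊤ := by
    intro τ w hw h
    have h2 := hw x
    rw [h, EReal.top_add_coe] at h2
    have h3 : f x + ((dist x x ^ 2 / (2 * τ) : ℝ) : EReal) < ⊤ := by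
      rw [← EReal.coe_toReal hxT (hbot _), ← EReal.coe_add]
      exact EReal.coe_lt_top _
    exact absurd (h2.trans_lt h3) (lt_irrefl _)
  have huT : f u ≠ ⊤ := hfin ν u hu
  have hvT : f v ≠ ⊤ := hfin μ v hv
  set S := descSlope f x with hSdef
  set s := S.toReal with hs
  have hs0 : 0 ≤ s := ENNReal.toReal_nonneg
  have hSS : S ≤ ENNReal.ofReal s := by rw [hs, ENNReal.ofReal_toReal hST]
  -- slope bounds
  have hsu := slope_lb hX f lam hbot hconv x u hxT huT s hs0 hSS
  have hsv := slope_lb hX f lam hbot hconv x v hxT hvT s hs0 hSS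
  rw [dist_comm x u] at hsu
  rw [dist_comm x v] at hsv
  -- variational inequalities
  have hVIu_x := resolv_VI hX f lam hbot hconv ν hν x u hu huT x hxT
  have hVIv_x := resolv_VI hX f lam hbot hconv μ hμ x v hv hvT x hxT
  have hVIu_v := resolv_VI hX f lam hbot hconv ν hν x u hu huT v hvT
  have hVIv_u := resolv_VI hX f lam hbot hconv μ hμ x v hv hvT u huT
  rw [dist_self] at hVIu_x hVIv_x
  rw [dist_comm v u] at hVIv_u
  set a := dist u x with ha
  set b := dist v x with hb
  set Dd := dist u v with hD
  have ha0 : 0 ≤ a := dist_nonneg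
  have hb0 : 0 ≤ b := dist_nonneg
  have hD0 : 0 ≤ Dd := dist_nonneg
  have hν' : ν ≠ 0 := ne_of_gt hν
  have hμ' : μ ≠ 0 := ne_of_gt hμ
  -- bound on a
  have hA : a * (1 + lam * ν) ≤ ν * s := by
    have hsum : (lam / 2 + 1 / (2 * ν)) * a ^ 2 - (0 ^ 2 - a ^ 2) / (2 * ν)
        + lam / 2 * a ^ 2 ≤ s * a := by linarith
    have h2 := mul_le_mul_of_nonneg_left hsum hν.le
    have e2 : ν * ((lam / 2 + 1 / (2 * ν)) * a ^ 2 - (0 ^ 2 - a ^ 2) / (2 * ν)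
        + lam / 2 * a ^ 2) = (1 + lam * ν) * a ^ 2 := by field_simp; ring
    rw [e2] at h2
    rcases ha0.eq_or_lt with h0 | h0
    · rw [← h0, zero_mul]; positivity
    · have h3 : a * (a * (1 + lam * ν)) ≤ a * (ν * s) := by
        have e5 : a * (a * (1 + lam * ν)) = (1 + lam * ν) * a ^ 2 := by ring
        have e6 : a * (ν * s) = ν * (s * a) := by ring
        rw [e5, e6]; exact h2
      exact le_of_mul_le_mul_left h3 h0
  have hB : b * (1 + lam * μ) ≤ μ * s := by
    have hsum : (lam / 2 + 1 / (2 * μ)) * b ^ 2 - (0 ^ 2 - b ^ 2) / (2 * μ)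
        + lam / 2 * b ^ 2 ≤ s * b := by linarith
    have h2 := mul_le_mul_of_nonneg_left hsum hμ.le
    have e2 : μ * ((lam / 2 + 1 / (2 * μ)) * b ^ 2 - (0 ^ 2 - b ^ 2) / (2 * μ)
        + lam / 2 * b ^ 2) = (1 + lam * μ) * b ^ 2 := by field_simp; ring
    rw [e2] at h2
    rcases hb0.eq_or_lt with h0 | h0
    · rw [← h0, zero_mul]; positivity
    · have h3 : b * (b * (1 + lam * μ)) ≤ b * (μ * s) := by
        have e5 : b * (b * (1 + lam * μ)) = (1 + lam * μ) * b ^ 2 := by ring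
        have e6 : b * (μ * s) = μ * (s * b) := by ring
        rw [e5, e6]; exact h2
      exact le_of_mul_le_mul_left h3 h0
  -- combined resolvent inequality
  have hcomb : (2 * lam * ν * μ + μ + ν) * Dd ^ 2 ≤ (μ - ν) * (b ^ 2 - a ^ 2) := by
    have hsum : (lam / 2 + 1 / (2 * ν)) * Dd ^ 2 + (lam / 2 + 1 / (2 * μ)) * Dd ^ 2
        ≤ (b ^ 2 - a ^ 2) / (2 * ν) + (a ^ 2 - b ^ 2) / (2 * μ) := by linarith
    have h2 := mul_le_mul_of_nonneg_left hsum (by positivity : (0:ℝ) ≤ 2 * ν * μ)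
    have e3 : 2 * ν * μ * ((lam / 2 + 1 / (2 * ν)) * Dd ^ 2 + (lam / 2 + 1 / (2 * μ)) * Dd ^ 2)
        = (2 * lam * ν * μ + μ + ν) * Dd ^ 2 := by field_simp; ring
    have e4 : 2 * ν * μ * ((b ^ 2 - a ^ 2) / (2 * ν) + (a ^ 2 - b ^ 2) / (2 * μ))
        = (μ - ν) * (b ^ 2 - a ^ 2) := by field_simp; ring
    rw [e3, e4] at h2
    exact h2
  have hbma : b - a ≤ Dd := by
    have h1 := abs_dist_sub_le v u x
    rw [dist_comm v u] at h1
    calc b - a ≤ |b - a| := le_abs_self _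
      _ ≤ Dd := h1
  -- main real estimate
  have hfinal : Dd * ((1 + lam * ν) * (1 + lam * μ)) ≤ (μ - ν) * s := by
    rcases hD0.eq_or_lt with h0 | h0
    · rw [← h0, zero_mul]; have : 0 ≤ μ - ν := by linarith
      positivity
    · have hK : 0 < ν * (1 + lam * μ) + μ * (1 + lam * ν) := by
        have := mul_pos hν hPμ; have := mul_pos hμ hPν; linarith
      have h5 : (2 * lam * ν * μ + μ + ν) * Dd ^ 2 ≤ (μ - ν) * (Dd * (a + b)) := by
        have hba : b ^ 2 - a ^ 2 ≤ Dd * (a + b) := by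
          have := mul_le_mul_of_nonneg_right hbma (by linarith : (0:ℝ) ≤ a + b)
          nlinarith [this]
        have : (μ - ν) * (b ^ 2 - a ^ 2) ≤ (μ - ν) * (Dd * (a + b)) := by
          apply mul_le_mul_of_nonneg_left hba (by linarith)
        linarith
      have h6a := mul_le_mul_of_nonneg_right hA hPμ.le
      have h6b := mul_le_mul_of_nonneg_right hB hPν.le
      have h6 : (a + b) * ((1 + lam * ν) * (1 + lam * μ))
          ≤ s * (ν * (1 + lam * μ) + μ * (1 + lam * ν)) := by nlinarith [h6a, h6b]
      have X1 := mul_le_mul_of_nonneg_right h5 (mul_pos hPν hPμ).le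
      have X2 := mul_le_mul_of_nonneg_left h6
        (mul_nonneg (by linarith : (0:ℝ) ≤ μ - ν) hD0)
      have hmain : ((ν * (1 + lam * μ) + μ * (1 + lam * ν)) * Dd)
            * (Dd * ((1 + lam * ν) * (1 + lam * μ)))
          ≤ ((ν * (1 + lam * μ) + μ * (1 + lam * ν)) * Dd) * ((μ - ν) * s) := by
        have eA : ((ν * (1 + lam * μ) + μ * (1 + lam * ν)) * Dd)
              * (Dd * ((1 + lam * ν) * (1 + lam * μ)))
            = (2 * lam * ν * μ + μ + ν) * Dd ^ 2 * ((1 + lam * ν) * (1 + lam * μ)) := by ring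
        have eB : (μ - ν) * (Dd * (a + b)) * ((1 + lam * ν) * (1 + lam * μ))
            = (μ - ν) * Dd * ((a + b) * ((1 + lam * ν) * (1 + lam * μ))) := by ring
        have eC : (μ - ν) * Dd * (s * (ν * (1 + lam * μ) + μ * (1 + lam * ν)))
            = ((ν * (1 + lam * μ) + μ * (1 + lam * ν)) * Dd) * ((μ - ν) * s) := by ring
        rw [eA]
        calc (2 * lam * ν * μ + μ + ν) * Dd ^ 2 * ((1 + lam * ν) * (1 + lam * μ))
            ≤ (μ - ν) * (Dd * (a + b)) * ((1 + lam * ν) * (1 + lam * μ)) := X1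
          _ = (μ - ν) * Dd * ((a + b) * ((1 + lam * ν) * (1 + lam * μ))) := eB
          _ ≤ (μ - ν) * Dd * (s * (ν * (1 + lam * μ) + μ * (1 + lam * ν))) := X2
          _ = _ := eC
      exact le_of_mul_le_mul_left hmain (mul_pos hK h0)
  -- the square root comparison
  have hsqle : Real.sqrt (1 - 2 * lamm * ν) ≤ 1 + lam * ν := by
    have h7 : 1 - 2 * lamm * ν ≤ (1 + lam * ν) ^ 2 := by
      nlinarith [mul_nonneg (by linarith : (0:ℝ) ≤ lam + lamm) hν.le, sq_nonneg (lam * ν)]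
    calc Real.sqrt (1 - 2 * lamm * ν) ≤ Real.sqrt ((1 + lam * ν) ^ 2) := Real.sqrt_le_sqrt h7
      _ = 1 + lam * ν := Real.sqrt_sq hPν.le
  have hDle : Dd ≤ (μ - ν) / ((1 + lam * μ) * Real.sqrt (1 - 2 * lamm * ν)) * s := by
    rw [div_mul_eq_mul_div, le_div_iff₀ (mul_pos hPμ hsqrt)]
    calc Dd * ((1 + lam * μ) * Real.sqrt (1 - 2 * lamm * ν))
        ≤ Dd * ((1 + lam * μ) * (1 + lam * ν)) := by gcongr
      _ = Dd * ((1 + lam * ν) * (1 + lam * μ)) := by ring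
      _ ≤ (μ - ν) * s := hfinal
  calc ENNReal.ofReal Dd
      ≤ ENNReal.ofReal ((μ - ν) / ((1 + lam * μ) * Real.sqrt (1 - 2 * lamm * ν)) * s) :=
        ENNReal.ofReal_le_ofReal hDle
    _ = ENNReal.ofReal ((μ - ν) / ((1 + lam * μ) * Real.sqrt (1 - 2 * lamm * ν)))
        * ENNReal.ofReal s := ENNReal.ofReal_mul hconst.le
    _ = _ := by rw [hs, ENNReal.ofReal_toReal hST]
end

section
/- Let (X,d) be a proper metric space and let {f_h}, f_h : X → ℝ ∪ {+∞}, Γ-converge to f : X → ℝ ∪ {+∞}, with f proper and lower semicontinuous. Assume there exists λ ∈ ℝ such that each f_h and f satisfy Assumption A1 with parameter λ. Then there exist constants C₁, C₂ ∈ ℝ, a point x̄ ∈ X, and H₀ ∈ ℕ (all independent of h) such that f_h(x) + C₁ d(x,x̄)² ≥ C₂ for every x ∈ X and every h ≥ H₀, and the same inequality holds with f in place of f_h. -/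
open Filter Topology MeasureTheory
open scoped ENNReal NNReal Classical

section Helpers

lemma ereal_exists_real_le' {a : EReal} (ha : a ≠ ⊥) : ∃ r : ℝ, (r : EReal) ≤ a := by
  by_cases ht : a = ⊤
  · exact ⟨0, ht ▸ le_top⟩
  · exact ⟨a.toReal, (EReal.coe_toReal ht ha).le⟩

lemma ereal_isBoundedUnder_le' {α : Type*} (l : Filter α) (g : α → EReal) :
    l.IsBoundedUnder (· ≤ ·) g :=
  ⟨⊤, Filter.eventually_map.mpr (Filter.Eventually.of_forall fun _ => le_top)⟩

lemma ereal_le_limsup' {α : Type*} {l : Filter α} [l.NeBot] {g : α → EReal} {b : EReal}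
    (h : ∀ᶠ x in l, b ≤ g x) : b ≤ Filter.limsup g l :=
  le_limsup_of_frequently_le h.frequently (ereal_isBoundedUnder_le' l g)

lemma ereal_quad_mono' {g : EReal} (hgb : g ≠ ⊥) {c c' r s : ℝ}
    (hkey : c' + r ≤ c + s)
    (h : (c : EReal) ≤ g + (r : EReal)) : (c' : EReal) ≤ g + (s : EReal) := by
  by_cases ht : g = ⊤
  · rw [ht, EReal.top_add_of_ne_bot (EReal.coe_ne_bot _)]; exact le_top
  · have hg : ((g.toReal : ℝ) : EReal) = g := EReal.coe_toReal ht hgb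
    rw [← hg, ← EReal.coe_add, EReal.coe_le_coe_iff] at h ⊢
    linarith

set_option maxHeartbeats 1000000 in
/-- Quadratic lower bound for a single function satisfying Assumption A1, given an upper
bound at a base point and a lower bound on the unit ball around it. -/
lemma quadLB' {X : Type*} [MetricSpace X] (lam : ℝ) (f : X → EReal)
    (hbot : ∀ x, f x ≠ ⊥) (hA1 : AssumptionA1 f lam) (xs : X) (M μ : ℝ)
    (hxs : f xs ≤ (M : EReal)) (hμ : ∀ y, dist y xs ≤ 1 → (μ : EReal) ≤ f y) :
    ∀ x : X, ((min μ 0 : ℝ) : EReal) ≤ f x +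
      (((2*|μ| + |M| + |lam| + 1 + |lam|/2) * dist x xs ^ 2 : ℝ) : EReal) := by
  set C : ℝ := 2*|μ| + |M| + |lam| + 1 + |lam|/2 with hCdef
  have hC : 0 ≤ C := by positivity
  intro x
  by_cases hx : f x = ⊤
  · rw [hx, EReal.top_add_of_ne_bot (EReal.coe_ne_bot _)]
    exact le_top
  -- f x is real
  have hfx : ((f x).toReal : EReal) = f x := EReal.coe_toReal hx (hbot x)
  set b : ℝ := (f x).toReal with hbdef
  have hxsne : f xs ≠ ⊤ := fun h => by rw [h] at hxs; exact absurd hxs (by simp)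
  have hfxs : ((f xs).toReal : EReal) = f xs := EReal.coe_toReal hxsne (hbot xs)
  set a : ℝ := (f xs).toReal with hadef
  have haM : a ≤ M := by rw [← EReal.coe_le_coe_iff, hfxs]; exact hxs
  have haμ : μ ≤ a := by rw [← EReal.coe_le_coe_iff, hfxs]; exact hμ xs (by simp)
  set dx : ℝ := dist x xs with hdxdef
  have hdx0 : 0 ≤ dx := dist_nonneg
  rw [← hfx, ← EReal.coe_add, EReal.coe_le_coe_iff]
  by_cases hd : dx ≤ 1
  · -- near case
    have hμb : μ ≤ b := by rw [← EReal.coe_le_coe_iff, hfx]; exact hμ x hd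
    nlinarith [sq_nonneg dx, min_le_left μ 0, min_le_right μ (0:ℝ)]
  push_neg at hd
  have hdxne : dx ≠ 0 := by linarith
  -- far case
  obtain ⟨γ, hγ0, hγ1, hineq⟩ := hA1 xs x hxsne hx
  set lm : ℝ := max (-lam) 0 with hlmdef
  have hlm0 : 0 ≤ lm := le_max_right _ _
  have hlmabs : lm ≤ |lam| := max_le (neg_le_abs lam) (abs_nonneg lam)
  set τ₀ : ℝ := 1/(2*(lm+1)) with hτ₀def
  have hτ₀pos : 0 < τ₀ := by positivity
  have hadm : ∀ τ : ℝ, 0 < τ → τ ≤ τ₀ → τ * lm < 1 := by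
    intro τ hτ hττ₀
    have h1 : τ * lm ≤ τ₀ * lm := by nlinarith
    have h2 : τ₀ * lm < 1 := by
      rw [hτ₀def, div_mul_eq_mul_div, div_lt_one (by positivity)]; nlinarith
    linarith
  set t : ℝ := 1/dx with htdef
  have ht0 : 0 ≤ t := by rw [htdef]; positivity
  have ht : t ∈ Set.Icc (0:ℝ) 1 := ⟨ht0, by rw [htdef, div_le_one (by linarith)]; linarith⟩
  have htdx : t * dx = 1 := by rw [htdef]; field_simp
  have ht2 : t ^ 2 * dx ^ 2 = 1 := by rw [← mul_pow, htdx, one_pow]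
  have hγbot := hbot (γ t)
  have hγtop : f (γ t) ≠ ⊤ := by
    intro h
    have h2 := hineq τ₀ hτ₀pos (hadm τ₀ hτ₀pos le_rfl) t ht
    rw [h] at h2; exact absurd h2 (not_le.mpr (EReal.coe_lt_top _))
  have hfγ : ((f (γ t)).toReal : EReal) = f (γ t) := EReal.coe_toReal hγtop hγbot
  set ρ : ℝ := (f (γ t)).toReal with hρdef
  set Dt : ℝ := dist (γ t) xs with hDtdef
  have hDt0 : 0 ≤ Dt := dist_nonneg
  -- multiplied-out real inequality
  have P : ∀ τ : ℝ, 0 < τ → τ ≤ τ₀ →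
      2*τ*ρ ≤ 2*τ*((1-t)*a + t*b) + t*dx^2 - (lam*τ + 1)*t*(1-t)*dx^2 - Dt^2 := by
    intro τ hτ hττ₀
    have h0 := hineq τ hτ (hadm τ hτ hττ₀) t ht
    rw [← hfγ] at h0
    have h1 := EReal.coe_le_coe_iff.mp h0
    rw [dist_comm xs x] at h1
    rw [← hdxdef, ← hDtdef, ← hadef, ← hbdef] at h1
    have hE : (1 - t) * a + t * (b + dx ^ 2 / (2 * τ))
        - 1 / 2 * (lam + 1 / τ) * t * (1 - t) * dx ^ 2 - Dt ^ 2 / (2 * τ)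
        = (2*τ*((1-t)*a + t*b) + t*dx^2 - (lam*τ + 1)*t*(1-t)*dx^2 - Dt^2) / (2*τ) := by
      field_simp
      ring
    rw [hE] at h1
    have h2 := (le_div_iff₀ (by positivity : (0:ℝ) < 2*τ)).mp h1
    linarith
  -- Dt ≤ 1
  have hDt1 : Dt ≤ 1 := by
    have hsq : Dt ^ 2 ≤ t ^ 2 * dx ^ 2 := by
      apply le_of_forall_pos_le_add
      intro ε hε
      set K : ℝ := (1 - t) * a + t * b - ρ - lam / 2 * t * (1 - t) * dx ^ 2 with hKdef
      set τ : ℝ := min τ₀ (ε / (2 * (|K| + 1))) with hτdef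
      have hτpos : 0 < τ := lt_min hτ₀pos (by positivity)
      have hP := P τ hτpos (min_le_left _ _)
      have hτε : τ ≤ ε / (2 * (|K| + 1)) := min_le_right _ _
      have h2τK : Dt ^ 2 ≤ t ^ 2 * dx ^ 2 + 2 * τ * K := by
        have expand : t^2*dx^2 + 2*τ*K
            = (2*τ*((1-t)*a + t*b) + t*dx^2 - (lam*τ + 1)*t*(1-t)*dx^2) - 2*τ*ρ := by
          simp only [hKdef]; ring
        linarith
      have habs : 2 * τ * K ≤ ε := by
        have h1 : 2 * τ * K ≤ 2 * τ * |K| :=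
          mul_le_mul_of_nonneg_left (le_abs_self K) (by linarith)
        have h2 : 2 * τ * |K| ≤ 2 * (ε / (2 * (|K| + 1))) * |K| := by
          apply mul_le_mul_of_nonneg_right _ (abs_nonneg K)
          linarith
        have hden : (0:ℝ) < |K| + 1 := by positivity
        have h3 : 2 * (ε / (2 * (|K| + 1))) * |K| ≤ ε := by
          rw [show 2 * (ε / (2 * (|K| + 1))) * |K| = ε * |K| / (|K| + 1) by
            field_simp]
          rw [div_le_iff₀ hden]
          nlinarith [abs_nonneg K, hε.le]
        linarith
      linarith
    nlinarith
  -- μ ≤ ρ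
  have hμρ : μ ≤ ρ := by rw [← EReal.coe_le_coe_iff, hfγ]; exact hμ (γ t) hDt1
  -- conclude from inequality at τ₀
  have hP0 := P τ₀ hτ₀pos le_rfl
  have hq : 2*τ₀*μ ≤ 2*τ₀*((1-t)*a + t*b) + 1 - lam*τ₀*(t*(1-t)*dx^2) := by
    have hμρ' : 2*τ₀*μ ≤ 2*τ₀*ρ := mul_le_mul_of_nonneg_left hμρ (by linarith)
    nlinarith [sq_nonneg Dt, hP0, ht2]
  have hq2 : 2*τ₀*μ*dx ≤ 2*τ₀*((dx-1)*a + b) + dx - lam*τ₀*((dx-1)*dx) := by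
    have e : (2*τ₀*((1-t)*a + t*b) + 1 - lam*τ₀*(t*(1-t)*dx^2)) * dx
        = 2*τ₀*((dx-1)*a + b) + dx - lam*τ₀*((dx-1)*dx) := by
      rw [htdef]; field_simp
    have hmul := mul_le_mul_of_nonneg_right hq hdx0
    linarith [hmul, e.le, e.ge]
  have hτ₀dx : 2*τ₀*((lm+1)*dx) = dx := by rw [hτ₀def]; field_simp
  have ha1 : a ≤ |M| := haM.trans (le_abs_self M)
  have hdd : (0:ℝ) ≤ (dx-1)*dx := by nlinarith
  have hdd2 : (0:ℝ) ≤ dx^2 - dx := by nlinarith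
  have hR : min μ 0 ≤ μ*dx - (dx-1)*a - (lm+1)*dx + lam/2*((dx-1)*dx)
      + (2*|μ| + |M| + |lam| + 1 + |lam|/2)*dx^2 := by
    have p1 : (0:ℝ) ≤ (μ + |μ|)*dx := mul_nonneg (by linarith [neg_abs_le μ]) hdx0
    have p2 : (0:ℝ) ≤ (dx-1)*(|M| - a) :=
      mul_nonneg (by linarith) (by linarith)
    have p3 : (0:ℝ) ≤ (lam + |lam|)*((dx-1)*dx) :=
      mul_nonneg (by linarith [neg_abs_le lam]) hdd
    have p4 : (0:ℝ) ≤ (|lam| - lm)*dx := mul_nonneg (by linarith) hdx0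
    have p5 : (0:ℝ) ≤ |μ| * (dx^2 - dx) := mul_nonneg (abs_nonneg μ) hdd2
    have p6 : (0:ℝ) ≤ |M| * (dx^2 - dx) := mul_nonneg (abs_nonneg M) hdd2
    have p7 : (0:ℝ) ≤ |lam| * (dx^2 - dx) := mul_nonneg (abs_nonneg lam) hdd2
    nlinarith [min_le_right μ 0, abs_nonneg μ, abs_nonneg M]
  rw [hCdef]
  have hfin : 2*τ₀*(min μ 0) ≤ 2*τ₀*(b + (2*|μ| + |M| + |lam| + 1 + |lam|/2)*dx^2) := by
    have hRm := mul_le_mul_of_nonneg_left hR (by linarith : (0:ℝ) ≤ 2*τ₀)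
    nlinarith [hRm, hq2, hτ₀dx]
  exact le_of_mul_le_mul_left hfin (by linarith)

lemma unif_lb' {X : Type*} [MetricSpace X] [ProperSpace X]
    (F : ℕ → X → EReal) (f : X → EReal) (hbot : ∀ x, f x ≠ ⊥)
    (hlim : ∀ (u : ℕ → X) (x : X), Filter.Tendsto u Filter.atTop (𝓝 x) →
      f x ≤ Filter.liminf (fun h => F h (u h)) Filter.atTop)
    (c : X) (R : ℝ) :
    ∃ (μ : ℝ) (H : ℕ), ∀ h, H ≤ h → ∀ y, dist y c ≤ R → (μ : EReal) ≤ F h y := by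
  by_contra hcon
  push_neg at hcon
  have key : ∀ N : ℕ, ∃ p : ℕ × X, N ≤ p.1 ∧ dist p.2 c ≤ R ∧ F p.1 p.2 < ((-(N:ℝ) : ℝ) : EReal) := by
    intro N
    obtain ⟨h, hh, y, hy1, hy2⟩ := hcon (-(N:ℝ)) N
    exact ⟨⟨h, y⟩, hh, hy1, hy2⟩
  choose p hp1 hp2 hp3 using key
  -- strictly increasing indices
  set φ : ℕ → ℕ := fun k => Nat.rec 0 (fun _ ih => (p ih).1 + 1) k with hφdef
  have hφsucc : ∀ k, φ (k+1) = (p (φ k)).1 + 1 := fun k => rfl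
  have hφk : ∀ k, k ≤ φ k := by
    intro k
    induction k with
    | zero => exact Nat.zero_le _
    | succ n ih =>
      have := hp1 (φ n)
      rw [hφsucc]
      omega
  set q : ℕ → ℕ := fun k => (p (φ k)).1 with hqdef
  set z : ℕ → X := fun k => (p (φ k)).2 with hzdef
  have hqmono : StrictMono q := by
    apply strictMono_nat_of_lt_succ
    intro k
    have h1 : φ (k+1) ≤ (p (φ (k+1))).1 := hp1 _
    have h2 := hφsucc k
    show (p (φ k)).1 < (p (φ (k+1))).1
    omega
  have hqk : ∀ k, k ≤ q k := fun k => (hφk k).trans (hp1 _)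
  have hzball : ∀ k, z k ∈ Metric.closedBall c R := fun k => Metric.mem_closedBall.mpr (hp2 _)
  classical
  obtain ⟨ybar, _, ψ, hψ, hz⟩ := (isCompact_closedBall c R).tendsto_subseq hzball
  have hqψ : StrictMono (fun j => q (ψ j)) := fun i j hij => hqmono (hψ hij)
  -- the diagonal sequence
  set u : ℕ → X := fun h => if hh : ∃ j, q (ψ j) = h then z (ψ hh.choose) else ybar with hudef
  have hu : Tendsto u atTop (𝓝 ybar) := by
    rw [Metric.tendsto_atTop]
    intro ε hε
    obtain ⟨J, hJ⟩ := Metric.tendsto_atTop.mp hz ε hε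
    refine ⟨q (ψ J), fun n hn => ?_⟩
    by_cases hh : ∃ j, q (ψ j) = n
    · have hj := hh.choose_spec
      have hJle : J ≤ hh.choose := by
        have : q (ψ J) ≤ q (ψ hh.choose) := by rw [hj]; exact hn
        exact hqψ.le_iff_le.mp this
      simp only [hudef, dif_pos hh]
      exact hJ _ hJle
    · simp only [hudef, dif_neg hh, dist_self]
      exact hε
  have hfreq : ∀ m : ℕ, ∃ᶠ h in atTop, F h (u h) ≤ ((-(m:ℝ) : ℝ) : EReal) := by
    intro m
    rw [frequently_atTop]
    intro N
    set j : ℕ := max m N with hjdef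
    refine ⟨q (ψ j), ?_, ?_⟩
    · exact le_trans (le_max_right m N) (le_trans hψ.le_apply (hqk _))
    · have hh : ∃ j', q (ψ j') = q (ψ j) := ⟨j, rfl⟩
      have hj' : hh.choose = j := hqψ.injective hh.choose_spec
      have : u (q (ψ j)) = z (ψ j) := by
        simp only [hudef, dif_pos hh, hj']
      rw [this]
      have hlt := hp3 (φ (ψ j))
      have hle : (m:ℝ) ≤ (φ (ψ j) : ℝ) := by
        have : m ≤ φ (ψ j) := le_trans (le_max_left m N) (le_trans (hψ.le_apply) (hφk _))
        exact_mod_cast this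
      refine le_trans hlt.le ?_
      exact EReal.coe_le_coe_iff.mpr (by linarith)
  have hliminf : ∀ m : ℕ, liminf (fun h => F h (u h)) atTop ≤ ((-(m:ℝ) : ℝ) : EReal) :=
    fun m => liminf_le_of_frequently_le (hfreq m)
  have hfy := hlim u ybar hu
  obtain ⟨r, hr⟩ := ereal_exists_real_le' (hbot ybar)
  obtain ⟨m, hm⟩ := exists_nat_gt (-r)
  have h1 : (r : EReal) ≤ ((-(m:ℝ) : ℝ) : EReal) := hr.trans ((hfy.trans (hliminf m)))
  rw [EReal.coe_le_coe_iff] at h1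
  linarith

end Helpers

/-- Uniform quadratic lower bound for a Γ-converging sequence of functions satisfying
Assumption A1 on a proper metric space. -/
theorem statement10 {X : Type*} [MetricSpace X] [ProperSpace X] (lam : ℝ)
    (F : ℕ → X → EReal) (f : X → EReal)
    (hFbot : ∀ h x, F h x ≠ ⊥) (hbot : ∀ x, f x ≠ ⊥)
    (hG : GammaConvSeq F f)
    (hproper : ∃ x, f x ≠ ⊤) (hlsc : LowerSemicontinuous f)
    (hFA1 : ∀ h, AssumptionA1 (F h) lam) (hfA1 : AssumptionA1 f lam) :
    ∃ (C₁ C₂ : ℝ) (xbar : X) (H₀ : ℕ),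
      (∀ x : X, ∀ h : ℕ, H₀ ≤ h →
        (C₂ : EReal) ≤ F h x + ((C₁ * dist x xbar ^ 2 : ℝ) : EReal)) ∧
      (∀ x : X, (C₂ : EReal) ≤ f x + ((C₁ * dist x xbar ^ 2 : ℝ) : EReal)) := by
  classical
  obtain ⟨xstar, hxstar⟩ := hproper
  have hfxs : (((f xstar).toReal : ℝ) : EReal) = f xstar :=
    EReal.coe_toReal hxstar (hbot _)
  set M : ℝ := (f xstar).toReal + 1 with hMdef
  obtain ⟨u, hu, hlimsup⟩ := hG.2 xstar
  have h1 : ∀ᶠ h in atTop, F h (u h) < ((M : ℝ) : EReal) :=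
    eventually_lt_of_limsup_lt
      (lt_of_le_of_lt hlimsup (by
        rw [← hfxs]
        exact EReal.coe_lt_coe_iff.mpr (by rw [hMdef]; linarith)))
      (ereal_isBoundedUnder_le' _ _)
  have h2 : ∀ᶠ h in atTop, dist (u h) xstar ≤ 1 := by
    have := Metric.tendsto_atTop.mp hu 1 one_pos
    obtain ⟨N, hN⟩ := this
    exact eventually_atTop.mpr ⟨N, fun h hh => (hN h hh).le⟩
  obtain ⟨H₁, hH₁⟩ := eventually_atTop.mp (h1.and h2)
  obtain ⟨μ, H₂, hμ⟩ := unif_lb' F f hbot hG.1 xstar 3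
  have hfball : ∀ y, dist y xstar ≤ 2 → (μ : EReal) ≤ f y := by
    intro y hy
    obtain ⟨v, hv, hvls⟩ := hG.2 y
    refine le_trans ?_ hvls
    refine ereal_le_limsup' ?_
    have hd : ∀ᶠ h in atTop, dist (v h) y ≤ 1 := by
      have := Metric.tendsto_atTop.mp hv 1 one_pos
      obtain ⟨N, hN⟩ := this
      exact eventually_atTop.mpr ⟨N, fun h hh => (hN h hh).le⟩
    filter_upwards [hd, eventually_ge_atTop H₂] with h hdh hNh
    refine hμ h hNh _ ?_
    calc dist (v h) xstar ≤ dist (v h) y + dist y xstar := dist_triangle _ _ _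
      _ ≤ 3 := by linarith
  set C : ℝ := 2*|μ| + |M| + |lam| + 1 + |lam|/2 with hCdef
  have hC : 0 ≤ C := by rw [hCdef]; positivity
  refine ⟨2*C, min μ 0 - 2*C, xstar, max H₁ H₂, ?_, ?_⟩
  · -- bound for F h
    intro x h hh
    obtain ⟨hFM, hFd⟩ := hH₁ h (le_trans (le_max_left _ _) hh)
    have hball : ∀ y, dist y (u h) ≤ 1 → (μ : EReal) ≤ F h y := by
      intro y hy
      refine hμ h (le_trans (le_max_right H₁ H₂) hh) y ?_
      calc dist y xstar ≤ dist y (u h) + dist (u h) xstar := dist_triangle _ _ _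
        _ ≤ 3 := by linarith
    have hQ := quadLB' lam (F h) (hFbot h) (hFA1 h) (u h) M μ hFM.le hball x
    refine ereal_quad_mono' (hFbot h x) ?_ hQ
    have htri : dist x (u h) ≤ dist x xstar + 1 := by
      calc dist x (u h) ≤ dist x xstar + dist xstar (u h) := dist_triangle _ _ _
        _ ≤ dist x xstar + 1 := by rw [dist_comm xstar (u h)]; linarith
    have hsq : dist x (u h) ^ 2 ≤ 2 * dist x xstar ^ 2 + 2 := by
      nlinarith [dist_nonneg (x := x) (y := xstar), dist_nonneg (x := x) (y := u h),
        mul_self_le_mul_self (dist_nonneg (x := x) (y := u h)) htri,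
        sq_nonneg (dist x xstar - 1)]
    have := mul_le_mul_of_nonneg_left hsq hC
    rw [hCdef] at this ⊢
    nlinarith [this]
  · -- bound for f
    intro x
    have hfM : f xstar ≤ (M : EReal) := by
      rw [← hfxs]
      exact_mod_cast EReal.coe_le_coe_iff.mpr (by rw [hMdef]; linarith)
    have hball : ∀ y, dist y xstar ≤ 1 → (μ : EReal) ≤ f y :=
      fun y hy => hfball y (by linarith)
    have hQ := quadLB' lam f hbot hfA1 xstar M μ hfM hball x
    refine ereal_quad_mono' (hbot x) ?_ hQ
    have : 0 ≤ C * dist x xstar ^ 2 := mul_nonneg hC (sq_nonneg _)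
    rw [hCdef] at this ⊢
    nlinarith [this, abs_nonneg μ, abs_nonneg M, abs_nonneg lam, sq_nonneg (dist x xstar),
      mul_nonneg (abs_nonneg μ) (sq_nonneg (dist x xstar)),
      mul_nonneg (abs_nonneg M) (sq_nonneg (dist x xstar)),
      mul_nonneg (abs_nonneg lam) (sq_nonneg (dist x xstar))]
end

section
/- Let (X,d) be an Hadamard space and let f : X → ℝ ∪ {+∞} be proper, λ-convex and lower semicontinuous for some λ ∈ ℝ. Let γ : [0,1] → X be an absolutely continuous curve with ∫₀¹ |γ̇|²(t) + |∂f|²(γ(t)) dt < +∞. Then sup_{t ∈ [0,1]} d( J_τ^f γ(t), γ(t) ) → 0 as τ ↘ 0, where J_τ^f denotes the (single-valued, for τ ∈ (0, 1/(2λ⁻))) resolvent of f. -/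
open Filter Topology MeasureTheory
open scoped ENNReal NNReal Classical

/-!
Testing the minimality of `u = J_τ γ(t)` against `γ(s)` gives
`d(u, γ t)² ≤ 2τ (f(γ s) - f u) + d(γ s, γ t)²`. A proper, lower semicontinuous, `λ`-convex
function on a geodesic space is bounded below by `C - B d(·, x₀)²`; for small `τ` the quadratic
part is absorbed on the left, so the first term is `O(τ)` once `f(γ s)` is bounded. Finite action
forces `f ∘ γ < ∞` on a dense set of times, and by total boundedness of `[0,1]` finitely many of
them, hence with a common bound on `f`, come within `δ` of every `t`; uniform continuity of `γ`
makes the second term small.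
-/

open Set

theorem IsACCurveOn.continuousOn {X : Type*} [MetricSpace X] {γ : ℝ → X} {a b : ℝ}
    (hγ : IsACCurveOn γ a b) : ContinuousOn γ (Icc a b) := by
  obtain ⟨g, hg, -, hγg⟩ := hγ
  rcases lt_or_ge b a with hba | hab
  · simp [Icc_eq_empty_of_lt hba]
  set Q : ℝ → ℝ := fun x => ∫ r in a..x, g r
  have hQ : ContinuousOn Q (Icc a b) := by
    simpa [Q, uIcc_of_le hab] using
      intervalIntegral.continuousOn_primitive_interval (μ := volume) (a := a) (b := b)
        (by rwa [uIcc_of_le hab])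
  have hint : ∀ x ∈ Icc a b, IntervalIntegrable g volume a x := fun x hx =>
    (hg.mono_set (by rw [uIcc_of_le hx.1]; exact Icc_subset_Icc le_rfl hx.2)).intervalIntegrable
  have hle_of_le : ∀ s ∈ Icc a b, ∀ t ∈ Icc a b, s ≤ t →
      dist (γ s) (γ t) ≤ dist (Q s) (Q t) :=
    fun s hs t ht hst => calc
      dist (γ s) (γ t) ≤ ∫ r in s..t, g r := hγg s t hs.1 hst ht.2
      _ = Q t - Q s := (intervalIntegral.integral_interval_sub_left (hint t ht) (hint s hs)).symm
      _ ≤ dist (Q s) (Q t) := by rw [dist_comm, Real.dist_eq]; exact le_abs_self _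
  have hle : ∀ s ∈ Icc a b, ∀ t ∈ Icc a b, dist (γ s) (γ t) ≤ dist (Q s) (Q t) := by
    intro s hs t ht
    rcases le_total s t with h | h
    · exact hle_of_le s hs t ht h
    · rw [dist_comm, dist_comm (Q s)]; exact hle_of_le t ht s hs h
  intro t ht
  refine Metric.continuousWithinAt_iff.2 fun ε hε => ?_
  obtain ⟨δ, hδ, hQδ⟩ := Metric.continuousWithinAt_iff.1 (hQ t ht) ε hε
  exact ⟨δ, hδ, fun s hs hst => (hle s hs t ht).trans_lt (hQδ hs hst)⟩

section Convexity

variable {X : Type*} [MetricSpace X] {f : X → EReal} {lam : ℝ}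

theorem LambdaConvex.apply_le_coe (hconv : LambdaConvex f lam) (hbot : ∀ x, f x ≠ ⊥)
    {γ : ℝ → X} (hγ : IsGeodesic γ) (h₀ : f (γ 0) ≠ ⊤) (h₁ : f (γ 1) ≠ ⊤)
    {t : ℝ} (ht : t ∈ Icc 0 1) :
    f (γ t) ≤ (((1 - t) * (f (γ 0)).toReal + t * (f (γ 1)).toReal
      - lam / 2 * t * (1 - t) * dist (γ 0) (γ 1) ^ 2 : ℝ) : EReal) := by
  have h := hconv γ hγ t ht
  rwa [← EReal.coe_toReal h₀ (hbot _), ← EReal.coe_toReal h₁ (hbot _), ← EReal.coe_mul,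
    ← EReal.coe_mul, ← EReal.coe_add, ← EReal.coe_sub] at h

/-- Away from a ball around `x₀` on which `f > f x₀ - 1`, convexity along the geodesic from `x₀`
to `y`, evaluated at distance `δ/2` from `x₀`, pays for `f y` with a multiple of `d(y,x₀)²`. -/
theorem LambdaConvex.exists_quadratic_lower_bound (hgeo : GeodesicSp X)
    (hconv : LambdaConvex f lam) (hbot : ∀ x, f x ≠ ⊥) {x₀ : X} (hx₀ : f x₀ ≠ ⊤)
    (hlsc : LowerSemicontinuousAt f x₀) :
    ∃ C B : ℝ, 0 ≤ B ∧ ∀ y, ((C - B * dist y x₀ ^ 2 : ℝ) : EReal) ≤ f y := by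
  set F := (f x₀).toReal
  obtain ⟨δ, hδ, hball⟩ : ∃ δ > 0, ∀ y, dist y x₀ < δ → ((F - 1 : ℝ) : EReal) < f y := by
    have hlt : ((F - 1 : ℝ) : EReal) < f x₀ := by
      rw [← EReal.coe_toReal hx₀ (hbot x₀), EReal.coe_lt_coe_iff]; linarith
    exact Metric.eventually_nhds_iff.1 (hlsc _ hlt)
  set lneg := max (-lam) 0
  have hB : 0 ≤ 2 / δ ^ 2 + lneg / 2 := by positivity
  refine ⟨F - 1, 2 / δ ^ 2 + lneg / 2, hB, fun y => ?_⟩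
  set D := dist y x₀
  rcases lt_or_ge D δ with hD | hD
  · refine le_trans (EReal.coe_le_coe_iff.2 ?_) (hball y hD).le
    nlinarith [mul_nonneg hB (sq_nonneg D)]
  by_cases hy : f y = ⊤
  · simp [hy]
  rw [← EReal.coe_toReal hy (hbot y), EReal.coe_le_coe_iff]
  set Y := (f y).toReal
  obtain ⟨γ, hγ, hγ0, hγ1⟩ := hgeo x₀ y
  have hDpos : 0 < D := hδ.trans_le hD
  set t := δ / (2 * D)
  have ht : t ∈ Icc (0 : ℝ) 1 := ⟨by positivity, by
    rw [div_le_one (by positivity)]; linarith⟩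
  have hγ01 : dist (γ 0) (γ 1) = D := by rw [hγ0, hγ1, dist_comm]
  have htD : t * D = δ / 2 := by simp only [t]; field_simp
  have hnear : dist (γ t) x₀ < δ := by
    rw [← hγ0, hγ t ht 0 ⟨le_rfl, zero_le_one⟩, hγ01, sub_zero, abs_of_nonneg ht.1, htD]
    linarith
  have hconvt := (hball _ hnear).trans_le
    (hconv.apply_le_coe hbot hγ (hγ0 ▸ hx₀) (hγ1 ▸ hy) ht)
  rw [hγ0, hγ1, dist_comm x₀ y, EReal.coe_lt_coe_iff] at hconvt
  have hlam : -lneg * t * D ^ 2 ≤ lam * t * (1 - t) * D ^ 2 := by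
    have : -lneg ≤ lam * (1 - t) := by
      nlinarith [le_max_left (-lam) 0, le_max_right (-lam) 0, ht.1, ht.2]
    nlinarith [mul_le_mul_of_nonneg_right this (by positivity : 0 ≤ t * D ^ 2)]
  -- dividing by `t` costs `1/t = 2D/δ ≤ 2D²/δ²` since `δ ≤ D`
  have hkey : t * (F - Y) < 1 + lneg / 2 * t * D ^ 2 := by nlinarith
  have h1t : 1 ≤ t * (2 / δ ^ 2 * D ^ 2) := by
    rw [show t * (2 / δ ^ 2 * D ^ 2) = D / δ by simp only [t]; field_simp,
      le_div_iff₀ hδ]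
    linarith
  have : t * (F - Y) ≤ t * ((2 / δ ^ 2 + lneg / 2) * D ^ 2) := by nlinarith
  nlinarith [le_of_mul_le_mul_left this (by positivity : 0 < t)]

end Convexity

theorem exists_near_le_of_totallyBounded {α : Type*} [PseudoMetricSpace α] {D K : Set α}
    (hD : TotallyBounded D) (hK : K ⊆ closure D) {φ : α → EReal} (hφ : ∀ s ∈ D, φ s ≠ ⊤)
    {δ : ℝ} (hδ : 0 < δ) : ∃ M : ℝ, ∀ t ∈ K, ∃ s ∈ D, dist s t < δ ∧ φ s ≤ M := by
  obtain ⟨T, hTD, hTfin, hcover⟩ := Metric.finite_approx_of_totallyBounded hD (δ / 2) (half_pos hδ)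
  obtain ⟨M, hM⟩ := (hTfin.image fun s => (φ s).toReal).bddAbove
  refine ⟨M, fun t ht => ?_⟩
  obtain ⟨s', hs'D, hts'⟩ := Metric.mem_closure_iff.1 (hK ht) (δ / 2) (half_pos hδ)
  obtain ⟨s, hsT, hs's⟩ := mem_iUnion₂.1 (hcover hs'D)
  refine ⟨s, hTD hsT, ?_, ?_⟩
  · have := dist_triangle s s' t
    rw [dist_comm t] at hts'
    linarith [Metric.mem_ball.1 hs's, dist_comm s s']
  · exact (EReal.le_coe_toReal (hφ s (hTD hsT))).trans
      (EReal.coe_le_coe_iff.2 (hM (mem_image_of_mem _ hsT)))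

section Action

variable {X : Type*} [MetricSpace X] {f : X → EReal} {γ : ℝ → X}

theorem exists_ne_top_of_actionIntegral_lt_top (hfin : actionIntegral f γ < ⊤)
    {a b : ℝ} (ha : 0 ≤ a) (hab : a < b) (hb : b ≤ 1) : ∃ s ∈ Ioo a b, f (γ s) ≠ ⊤ := by
  by_contra! htop
  have hslope : ∀ s ∈ Ioo a b, mSpeed γ s ^ 2 + descSlope f (γ s) ^ 2 = ⊤ := fun s hs => by
    simp [descSlope, htop s hs]
  refine hfin.ne (top_le_iff.1 ?_)
  calc (⊤ : ℝ≥0∞) = ∫⁻ _ in Ioo a b, ⊤ := by simp [Real.volume_Ioo, hab]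
    _ = ∫⁻ s in Ioo a b, mSpeed γ s ^ 2 + descSlope f (γ s) ^ 2 :=
      (setLIntegral_congr_fun measurableSet_Ioo fun s hs => (hslope s hs).symm)
    _ ≤ actionIntegral f γ := lintegral_mono_set (Ioo_subset_Ioo ha hb)

theorem Icc_subset_closure_of_actionIntegral_lt_top (hfin : actionIntegral f γ < ⊤) :
    Icc 0 1 ⊆ closure {s ∈ Icc (0 : ℝ) 1 | f (γ s) ≠ ⊤} := by
  refine (closure_Ioo zero_ne_one).symm.subset.trans
    (closure_minimal (fun a ha => Metric.mem_closure_iff.2 fun ε hε => ?_) isClosed_closure)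
  obtain ⟨s, hs, hfs⟩ := exists_ne_top_of_actionIntegral_lt_top hfin (le_max_left 0 (a - ε))
    (by simp only [max_lt_iff, lt_min_iff]; constructor <;> constructor <;> linarith [ha.1, ha.2])
    (min_le_left 1 (a + ε))
  refine ⟨s, ⟨⟨(le_max_left _ _).trans hs.1.le, hs.2.le.trans (min_le_left _ _)⟩, hfs⟩, ?_⟩
  rw [Real.dist_eq, abs_lt]
  constructor <;> linarith [le_max_right 0 (a - ε), min_le_right 1 (a + ε), hs.1, hs.2]

end Action

theorem dist_sq_le_of_mem_resolvSet {X : Type*} [MetricSpace X] {f : X → EReal} {x₀ : X}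
    {C B : ℝ} (hB : 0 ≤ B) (hlow : ∀ y, ((C - B * dist y x₀ ^ 2 : ℝ) : EReal) ≤ f y)
    {τ : ℝ} (hτ : 0 < τ) (hτB : 8 * τ * B ≤ 1) {x y u : X} {M : ℝ} (hy : f y ≤ M)
    (hu : u ∈ resolvSet f τ x) :
    dist u x ^ 2 ≤ 4 * τ * (M - C + 2 * B * dist x x₀ ^ 2) + 2 * dist y x ^ 2 := by
  have hcomp : ((C - B * dist u x₀ ^ 2 + dist u x ^ 2 / (2 * τ) : ℝ) : EReal)
      ≤ ((M + dist y x ^ 2 / (2 * τ) : ℝ) : EReal) := by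
    rw [EReal.coe_add, EReal.coe_add]
    exact (add_le_add_left (hlow u) _).trans ((hu y).trans (add_le_add_left hy _))
  have hux : dist u x₀ ^ 2 ≤ 2 * dist u x ^ 2 + 2 * dist x x₀ ^ 2 := by
    nlinarith [dist_triangle u x x₀, dist_nonneg (x := u) (y := x₀),
      sq_nonneg (dist u x - dist x x₀)]
  have hreal := EReal.coe_le_coe_iff.1 hcomp
  have hcleared : dist u x ^ 2 ≤ 2 * τ * (M - C) + 2 * τ * B * dist u x₀ ^ 2 + dist y x ^ 2 := by
    have := mul_le_mul_of_nonneg_left hreal (by positivity : 0 ≤ 2 * τ)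
    field_simp at this
    linarith
  nlinarith [mul_le_mul_of_nonneg_left hux (by positivity : 0 ≤ 2 * τ * B),
    mul_le_mul_of_nonneg_right hτB (sq_nonneg (dist u x))]

theorem statement15_general {X : Type*} [MetricSpace X] (hX : IsCAT0 X)
    (f : X → EReal) (lam : ℝ)
    (hbot : ∀ x, f x ≠ ⊥) (hproper : ∃ x, f x ≠ ⊤)
    (hconv : LambdaConvex f lam) (hlsc : LowerSemicontinuous f)
    (γ : ℝ → X) (hγ : IsACCurveOn γ 0 1) (hfin : actionIntegral f γ < ⊤) :
    ∀ ε : ℝ, 0 < ε → ∃ τ₀ : ℝ, 0 < τ₀ ∧ ∀ τ : ℝ, 0 < τ → τ ≤ τ₀ →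
      ∀ t ∈ Set.Icc (0:ℝ) 1, ∀ u ∈ resolvSet f τ (γ t), dist u (γ t) < ε := by
  intro ε hε
  obtain ⟨x₀, hx₀⟩ := hproper
  obtain ⟨C, B, hB, hlow⟩ := hconv.exists_quadratic_lower_bound hX.1 hbot hx₀ (hlsc x₀)
  have hγc := hγ.continuousOn
  obtain ⟨R, hR⟩ := (Metric.isBounded_iff_subset_closedBall x₀).1
    (isCompact_Icc.image_of_continuousOn hγc).isBounded
  obtain ⟨δ, hδ, hunif⟩ := Metric.uniformContinuousOn_iff.1
    (isCompact_Icc.uniformContinuousOn_of_continuous hγc) (ε / 2) (half_pos hε)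
  obtain ⟨M, hM⟩ := exists_near_le_of_totallyBounded (D := {s ∈ Icc (0 : ℝ) 1 | f (γ s) ≠ ⊤})
    (isCompact_Icc.totallyBounded.subset (sep_subset _ _))
    (Icc_subset_closure_of_actionIntegral_lt_top hfin) (fun s hs => hs.2) hδ
  set K := M - C + 2 * B * R ^ 2
  refine ⟨min (1 / (8 * B + 1)) (ε ^ 2 / (8 * (|K| + 1))), by positivity,
    fun τ hτ hτ₀ t ht u hu => ?_⟩
  obtain ⟨s, ⟨hs, -⟩, hst, hfs⟩ := hM t ht
  have hτB : 8 * τ * B ≤ 1 := by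
    have := hτ₀.trans (min_le_left _ _)
    rw [le_div_iff₀ (by positivity)] at this
    nlinarith
  have hτK : 4 * τ * K ≤ ε ^ 2 / 2 := by
    have := hτ₀.trans (min_le_right _ _)
    rw [le_div_iff₀ (by positivity)] at this
    nlinarith [le_abs_self K, abs_nonneg K]
  have hγt : dist (γ t) x₀ ^ 2 ≤ R ^ 2 :=
    pow_le_pow_left₀ dist_nonneg (hR (mem_image_of_mem γ ht)) 2
  have hγst : dist (γ s) (γ t) ^ 2 < (ε / 2) ^ 2 :=
    pow_lt_pow_left₀ (hunif s hs t ht hst) dist_nonneg two_ne_zero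
  have hest := dist_sq_le_of_mem_resolvSet hB hlow hτ hτB hfs hu
  refine lt_of_pow_lt_pow_left₀ 2 hε.le ?_
  nlinarith [mul_le_mul_of_nonneg_left hγt (by positivity : 0 ≤ 8 * τ * B)]

/-- Uniform convergence of the resolvents to the identity along a curve of finite action. -/
theorem statement15 {X : Type*} [MetricSpace X] [CompleteSpace X] (hX : IsCAT0 X)
    (f : X → EReal) (lam : ℝ)
    (hbot : ∀ x, f x ≠ ⊥) (hproper : ∃ x, f x ≠ ⊤)
    (hconv : LambdaConvex f lam) (hlsc : LowerSemicontinuous f)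
    (γ : ℝ → X) (hγ : IsACCurveOn γ 0 1) (hfin : actionIntegral f γ < ⊤) :
    ∀ ε : ℝ, 0 < ε → ∃ τ₀ : ℝ, 0 < τ₀ ∧ ∀ τ : ℝ, 0 < τ → τ ≤ τ₀ →
      ∀ t ∈ Set.Icc (0:ℝ) 1, ∀ u ∈ resolvSet f τ (γ t), dist u (γ t) < ε :=
  statement15_general hX f lam hbot hproper hconv hlsc γ hγ hfin
end

section
/- Let X = [0,∞) with the Euclidean distance, let h ≥ 1 be a natural number, and let f_h : X → ℝ be defined by f_h(x) = 1 − hx for 0 ≤ x ≤ 1/h and f_h(x) = 0 for x > 1/h. Then for every absolutely continuous curve φ : [0,1] → X with φ(0) = 0 and φ(1) = 1, it holds ∫₀¹ |φ̇|²(t) + |∂f_h|²(φ(t)) dt ≥ 2. -/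
open Filter Topology MeasureTheory
open scoped ENNReal NNReal Classical

/-! Let `T` be the first time the curve reaches `1/h`. On `(0,T)` it stays in `[0,1/h)`, where
`f_h` decreases with slope `h` to the right, so `|∂f_h| ≥ h` there and by AM-GM
`|φ̇|² + |∂f_h|²(φ) ≥ 2h|φ̇|`. Since the curve is real-valued and absolutely continuous, its
metric speed is `|φ'|` a.e., and the fundamental theorem of calculus gives
`∫₀ᵀ |φ̇| ≥ φ(T) - φ(0) ≥ 1/h`. Hence the action is at least `2h · (1/h) = 2`. -/

open Set

theorem AbsolutelyContinuousOnInterval.of_dist_le {X Y : Type*} [PseudoMetricSpace X]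
    [PseudoMetricSpace Y] {f : ℝ → X} {g : ℝ → Y} {a b : ℝ}
    (hg : AbsolutelyContinuousOnInterval g a b)
    (hfg : ∀ s ∈ uIcc a b, ∀ t ∈ uIcc a b, dist (f s) (f t) ≤ dist (g s) (g t)) :
    AbsolutelyContinuousOnInterval f a b := by
  refine squeeze_zero' (Eventually.of_forall fun E ↦ Finset.sum_nonneg fun _ _ ↦ dist_nonneg)
    ?_ hg
  filter_upwards [mem_inf_of_right (mem_principal_self _)] with E hE
  exact Finset.sum_le_sum fun i hi ↦ hfg _ (hE.1 i hi).1 _ (hE.1 i hi).2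

theorem IsACCurveOn.absolutelyContinuousOnInterval {X : Type*} [MetricSpace X] {γ : ℝ → X}
    {a b : ℝ} (hγ : IsACCurveOn γ a b) (hab : a ≤ b) :
    AbsolutelyContinuousOnInterval γ a b := by
  obtain ⟨g, hg_int, hg_nonneg, hγg⟩ := hγ
  have hg_ii : IntervalIntegrable g volume a b :=
    (intervalIntegrable_iff_integrableOn_Icc_of_le hab).2 hg_int
  refine (hg_ii.absolutelyContinuousOnInterval_intervalIntegral left_mem_uIcc).of_dist_le ?_
  have key : ∀ s ∈ Icc a b, ∀ t ∈ Icc a b, s ≤ t →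
      dist (γ s) (γ t) ≤ dist (∫ v in a..s, g v) (∫ v in a..t, g v) := by
    intro s hs t ht hst
    rw [dist_comm (∫ v in a..s, g v), Real.dist_eq,
      intervalIntegral.integral_interval_sub_left (hg_ii.mono_set ?_) (hg_ii.mono_set ?_)]
    · exact (hγg s t hs.1 hst ht.2).trans (le_abs_self _)
    · rw [uIcc_of_le hab]; exact uIcc_subset_Icc (left_mem_Icc.2 hab) ht
    · rw [uIcc_of_le hab]; exact uIcc_subset_Icc (left_mem_Icc.2 hab) hs
  rw [uIcc_of_le hab]
  intro s hs t ht
  rcases le_total s t with hst | hts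
  · exact key s hs t ht hst
  · rw [dist_comm, dist_comm (∫ v in a..s, g v)]
    exact key t ht s hs hts

theorem Isometry.mSpeed_comp {X Y : Type*} [MetricSpace X] [MetricSpace Y] {f : X → Y}
    (hf : Isometry f) (γ : ℝ → X) (t : ℝ) :
    mSpeed (f ∘ γ) t = mSpeed γ t := by
  simp only [mSpeed, Function.comp_apply, hf.dist_eq]

theorem mSpeed_eq_enorm_deriv {ψ : ℝ → ℝ} {t : ℝ} (hψ : DifferentiableAt ℝ ψ t) :
    mSpeed ψ t = ‖deriv ψ t‖ₑ := by
  rw [Real.enorm_eq_ofReal_abs]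
  refine ((ENNReal.continuous_ofReal.tendsto _).comp ?_).limsup_eq
  refine (hasDerivAt_iff_tendsto_slope.1 hψ.hasDerivAt).abs.congr fun s ↦ ?_
  rw [slope_def_field, abs_div, Real.dist_eq]

theorem AbsolutelyContinuousOnInterval.enorm_sub_le_lintegral_mSpeed {ψ : ℝ → ℝ} {a b : ℝ}
    (hψ : AbsolutelyContinuousOnInterval ψ a b) (hab : a ≤ b) :
    ‖ψ b - ψ a‖ₑ ≤ ∫⁻ t in Ioo a b, mSpeed ψ t := by
  have hspeed : ∀ᵐ t ∂volume.restrict (Ioc a b), ‖deriv ψ t‖ₑ = mSpeed ψ t := by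
    filter_upwards [ae_restrict_mem measurableSet_Ioc, ae_restrict_of_ae hψ.ae_differentiableAt]
      with t ht hdiff
    rw [uIcc_of_le hab] at hdiff
    exact (mSpeed_eq_enorm_deriv (hdiff (Ioc_subset_Icc_self ht))).symm
  calc ‖ψ b - ψ a‖ₑ = ‖∫ t in Ioc a b, deriv ψ t‖ₑ := by
        rw [← hψ.integral_deriv_eq_sub, intervalIntegral.integral_of_le hab]
    _ ≤ ∫⁻ t in Ioc a b, ‖deriv ψ t‖ₑ := enorm_integral_le_lintegral_enorm _
    _ = ∫⁻ t in Ioo a b, mSpeed ψ t := by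
        rw [lintegral_congr_ae hspeed, Measure.restrict_congr_set Ioo_ae_eq_Ioc]

theorem ContinuousOn.exists_first_le {f : ℝ → ℝ} {a b c : ℝ} (hab : a ≤ b)
    (hf : ContinuousOn f (Icc a b)) (ha : f a < c) (hb : c ≤ f b) :
    ∃ T ∈ Ioc a b, c ≤ f T ∧ ∀ t ∈ Ico a T, f t < c := by
  set S := Icc a b ∩ f ⁻¹' Ici c
  have hS : IsClosed S := hf.preimage_isClosed_of_isClosed isClosed_Icc isClosed_Ici
  have hbS : b ∈ S := ⟨right_mem_Icc.2 hab, hb⟩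
  have hS_bdd : BddBelow S := ⟨a, fun t ht ↦ ht.1.1⟩
  have hTS : sInf S ∈ S := hS.csInf_mem ⟨b, hbS⟩ hS_bdd
  refine ⟨sInf S, ⟨hTS.1.1.lt_of_ne ?_, hTS.1.2⟩, hTS.2, fun t ht ↦ ?_⟩
  · rintro h; exact (not_le.2 ha) (h ▸ hTS.2)
  · by_contra! hct
    exact (csInf_le hS_bdd ⟨⟨ht.1, ht.2.le.trans hTS.1.2⟩, hct⟩).not_gt ht.2

theorem le_descSlope_of_tendsto {X : Type*} [MetricSpace X] {f : X → EReal} {x : X}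
    {u : ℕ → X} {c : ℝ≥0∞} (hu : Tendsto u atTop (𝓝[≠] x)) (hfx : f x ≠ ⊤)
    (hc : ∀ n, c ≤ ENNReal.ofReal (((f x - f (u n)) ⊔ 0).toReal / dist (u n) x)) :
    c ≤ descSlope f x := by
  rw [descSlope, if_neg hfx]
  exact le_limsup_of_frequently_le (hu.frequently (Frequently.of_forall hc))

theorem ENNReal.two_mul_le_add_sq (a b : ℝ≥0∞) : 2 * a * b ≤ a ^ 2 + b ^ 2 := by
  rcases eq_top_or_lt_top a with rfl | ha
  · simp
  rcases eq_top_or_lt_top b with rfl | hb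
  · simp
  lift a to ℝ≥0 using ha.ne
  lift b to ℝ≥0 using hb.ne
  exact_mod_cast _root_.two_mul_le_add_sq a b

/-- The function `f_h` of the statement. -/
noncomputable def ramp (h : ℝ) (x : {x : ℝ // 0 ≤ x}) : EReal :=
  ((if (x : ℝ) ≤ 1 / h then 1 - h * (x : ℝ) else 0 : ℝ) : EReal)

theorem ofReal_le_descSlope_ramp {h : ℝ} (hh : 0 < h) {x : {x : ℝ // 0 ≤ x}}
    (hx : (x : ℝ) < 1 / h) : ENNReal.ofReal h ≤ descSlope (ramp h) x := by
  have hquot : ∀ y : {x : ℝ // 0 ≤ x}, (x : ℝ) < y → (y : ℝ) ≤ 1 / h →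
      ((ramp h x - ramp h y) ⊔ 0).toReal / dist y x = h := by
    intro y hxy hy
    have hdiff : (1 - h * x) - (1 - h * y) = h * (y - x) := by ring
    have hpos : 0 ≤ h * ((y : ℝ) - x) := by nlinarith
    rw [ramp, ramp, if_pos hx.le, if_pos hy, ← EReal.coe_sub, hdiff,
      sup_eq_left.2 (EReal.coe_nonneg.2 hpos), EReal.toReal_coe, Subtype.dist_eq, Real.dist_eq,
      abs_of_pos (sub_pos.2 hxy), mul_div_cancel_right₀ _ (sub_pos.2 hxy).ne']
  set δ := 1 / h - x
  have hδ : 0 < δ := sub_pos.2 hx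
  have hstep : ∀ n : ℕ, 0 < δ * (1 / ((n : ℝ) + 1)) ∧ δ * (1 / ((n : ℝ) + 1)) ≤ δ := fun n ↦
    ⟨by positivity, mul_le_of_le_one_right hδ.le (div_le_one_of_le₀ (by simp) (by positivity))⟩
  let u : ℕ → {x : ℝ // 0 ≤ x} := fun n ↦ ⟨x + δ * (1 / ((n : ℝ) + 1)), by
    have := x.2; have := (hstep n).1; positivity⟩
  refine le_descSlope_of_tendsto (u := u) ?_ (EReal.coe_ne_top _) fun n ↦ ?_
  · refine tendsto_nhdsWithin_iff.2 ⟨tendsto_subtype_rng.2 ?_, Eventually.of_forall fun n ↦ ?_⟩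
    · simpa [u] using (tendsto_const_nhds (x := (x : ℝ))).add
        (tendsto_one_div_add_atTop_nhds_zero_nat.const_mul δ)
    · exact fun hn ↦ (hstep n).1.ne' (by simpa [u] using congrArg Subtype.val hn)
  · rw [hquot (u n) (by simp only [u]; linarith [(hstep n).1])
      (by simp only [u]; linarith [(hstep n).2])]

/-- Second example: on `X = [0,∞)` with `f_h(x) = max(1 - h x, 0)`, any absolutely continuous
curve from `0` to `1` has `f_h`-action at least `2`. -/
theorem statement17 (h : ℕ) (hh : 1 ≤ h)
    (φ : ℝ → {x : ℝ // 0 ≤ x}) (hφ : IsACCurveOn φ 0 1)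
    (h0 : (φ 0 : ℝ) = 0) (h1 : (φ 1 : ℝ) = 1) :
    (2 : ℝ≥0∞) ≤
      actionIntegral
        (fun x : {x : ℝ // 0 ≤ x} =>
          ((if (x : ℝ) ≤ 1 / (h : ℝ) then 1 - (h : ℝ) * (x : ℝ) else 0 : ℝ) : EReal)) φ := by
  change 2 ≤ actionIntegral (ramp h) φ
  have hh' : (0 : ℝ) < h := by exact_mod_cast hh
  set ψ : ℝ → ℝ := Subtype.val ∘ φ
  have hψ : AbsolutelyContinuousOnInterval ψ 0 1 :=
    (hφ.absolutelyContinuousOnInterval zero_le_one).of_dist_le fun s _ t _ ↦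
      (Subtype.dist_eq _ _).ge
  have hψ_cont : ContinuousOn ψ (Icc 0 1) := hψ.continuousOn.mono Icc_subset_uIcc
  obtain ⟨T, ⟨hT0, hT1⟩, hψT, hbelow⟩ := hψ_cont.exists_first_le (c := 1 / (h : ℝ))
    zero_le_one (by simp [ψ, h0, hh']) (by simp [ψ, h1, inv_le_one_of_one_le₀, hh])
  have hspeed : ∀ t ∈ Ioo 0 T, 2 * ENNReal.ofReal h * mSpeed φ t
      ≤ mSpeed φ t ^ 2 + descSlope (ramp h) (φ t) ^ 2 := fun t ht ↦
    calc 2 * ENNReal.ofReal h * mSpeed φ t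
        ≤ 2 * descSlope (ramp h) (φ t) * mSpeed φ t := by
          gcongr; exact ofReal_le_descSlope_ramp hh' (hbelow t ⟨ht.1.le, ht.2⟩)
      _ ≤ _ := by rw [mul_right_comm]; exact ENNReal.two_mul_le_add_sq _ _
  calc (2 : ℝ≥0∞) = 2 * ENNReal.ofReal h * ENNReal.ofReal (1 / h) := by
        rw [mul_assoc, ← ENNReal.ofReal_mul hh'.le, mul_one_div_cancel hh'.ne', ENNReal.ofReal_one,
          mul_one]
    _ ≤ 2 * ENNReal.ofReal h * ‖ψ T - ψ 0‖ₑ := by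
        rw [show ψ 0 = 0 from h0, sub_zero, Real.enorm_of_nonneg (show 0 ≤ ψ T from (φ T).2)]
        gcongr
    _ ≤ 2 * ENNReal.ofReal h * ∫⁻ t in Ioo 0 T, mSpeed φ t := by
        gcongr
        have hval : Isometry (Subtype.val : {x : ℝ // 0 ≤ x} → ℝ) := fun _ _ ↦ rfl
        have hψ_T : AbsolutelyContinuousOnInterval ψ 0 T := hψ.mono (by
          rw [uIcc_of_le hT0.le, uIcc_of_le zero_le_one]; exact Icc_subset_Icc_right hT1)
        simpa only [ψ, hval.mSpeed_comp] using hψ_T.enorm_sub_le_lintegral_mSpeed hT0.le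
    _ = ∫⁻ t in Ioo 0 T, 2 * ENNReal.ofReal h * mSpeed φ t :=
        (lintegral_const_mul' _ _ (by finiteness)).symm
    _ ≤ ∫⁻ t in Ioo 0 T, (mSpeed φ t ^ 2 + descSlope (ramp h) (φ t) ^ 2) :=
        setLIntegral_mono' measurableSet_Ioo hspeed
    _ ≤ actionIntegral (ramp h) φ := lintegral_mono_set (Ioo_subset_Ioo_right hT1)
end
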